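/- arXiv:1112.0467 — 9 statements merged into one kernel-verified Lean document; each statement's English description precedes it below -/
import Mathlib

section
/- Suppose the positive messages {m̃_{a→i}(x_i), ñ_{i→a}(x_i)} (a ∈ A, i ∈ N(a)) solve the scaled BP fixed-point equations m̃_{a→i}(x_i) = ω_{a,i} ∑_{x_a\x_i} f_a(x_a) ∏_{j∈N(a)\i} ñ_{j→a}(x_j) and ñ_{i→a}(x_i) = ∏_{c∈N(i)\a} m̃_{c→i}(x_i), where the ω_{a,i} are arbitrary positive constants, and define z̃_a := 1/(∑_{x_a} f_a(x_a) ∏_{i∈N(a)} ñ_{i→a}(x_i)) for all a ∈ A. Then there exist positive constants κ_{a,i}, τ_{a,i} such that the rescaled messages m_{a→i} = m̃_{a→i}/κ_{a,i}, n_{i→a} = ñ_{i→a}/τ_{a,i} solve the normalized BP fixed-point equations m_{a→i}(x_i) = z_a ∑_{x_a\x_i} f_a(x_a) ∏_{j∈N(a)\i} n_{j→a}(x_j) and n_{i→a}(x_i) = ∏_{c∈N(i)\a} m_{c→i}(x_i), where z_a is the positive constant making b_a(x_a) := z_a f_a(x_a) ∏_{i∈N(a)} n_{i→a}(x_i) sum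 to one, if and only if there exist positive constants g_i (i ∈ I) such that ω_{a,i} = g_i · z̃_a for all a ∈ A and i ∈ N(a). -/
open Finset

abbrev Cfg {ι : Type} (S : ι → Type) (t : Finset ι) : Type :=
  ∀ j : {x // x ∈ t}, S j.1

/-!
If the rescaled messages solve the normalized equations, the variable equations force
`τ a i = ∏_{c ∈ N(i) \ a} κ c i` and normalization forces
`z a = z̃ a * ∏_{j ∈ N(a)} τ a j`. Substituting both into the factor equation leaves
`ω a i = κ a i * τ a i * z̃ a`, and `κ a i * τ a i = ∏_{c ∈ N(i)} κ c i =: g i` depends on `i`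
only. Conversely, given `g`, take `κ a i := g i ^ (1 / |N(i)|)` and define `τ` and `z` by the
two relations above; then `κ a i * τ a i = g i`.
-/

section Rescaling

variable {K : Type*} [Field K]

lemma sum_mul_prod_div {γ δ : Type*} [Fintype γ] (s : Finset δ) (F : γ → K)
    (u : γ → δ → K) (v : δ → K) :
    ∑ x, F x * ∏ j ∈ s, u x j / v j = (∑ x, F x * ∏ j ∈ s, u x j) / ∏ j ∈ s, v j := by
  simp only [sum_div, prod_div_distrib, mul_div_assoc]

lemma sum_ite_mul_prod_div {γ δ : Type*} [Fintype γ] (P : γ → Prop) [DecidablePred P]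
    (s : Finset δ) (F : γ → K) (u : γ → δ → K) (v : δ → K) :
    ∑ x, (if P x then F x * ∏ j ∈ s, u x j / v j else 0) =
      (∑ x, if P x then F x * ∏ j ∈ s, u x j else 0) / ∏ j ∈ s, v j := by
  simp only [sum_div, ite_div, zero_div, prod_div_distrib, mul_div_assoc]

lemma prod_subtype_eq_mul_prod_filter_ne {ι M : Type*} [CommMonoid M] [DecidableEq ι]
    {t : Finset ι} {i : ι} (hi : i ∈ t) (v : ι → M) :
    ∏ j : {x // x ∈ t}, v j.1 =
      v i * ∏ j ∈ univ.filter (fun j : {x // x ∈ t} => j.1 ≠ i), v j.1 := by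
  have : univ.filter (fun j : {x // x ∈ t} => j.1 ≠ i) = univ.erase ⟨i, hi⟩ := by
    ext j
    simp [Subtype.ext_iff]
  rw [this]
  exact (mul_prod_erase _ (fun j : {x // x ∈ t} => v j.1) (mem_univ ⟨i, hi⟩)).symm

lemma div_eq_prod_div_iff {β : Type*} {s : Finset β} {x y : K} {u v : β → K}
    (hx : x = ∏ c ∈ s, u c) (hx0 : x ≠ 0) (hy : y ≠ 0) (hv : ∀ c ∈ s, v c ≠ 0) :
    x / y = ∏ c ∈ s, u c / v c ↔ y = ∏ c ∈ s, v c := by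
  rw [prod_div_distrib, ← hx, div_eq_div_iff hy (prod_ne_zero_iff.2 hv),
    mul_right_inj' hx0, eq_comm]

variable {ι : Type} [DecidableEq ι] {S : ι → Type} [∀ i, Fintype (S i)]
  {t : Finset ι} (F : Cfg S t → K) (n : ∀ i, S i → K) (τ : ι → K)

lemma rescaled_normalization_iff {z zt : K}
    (hZ : ∑ xa : Cfg S t, F xa * ∏ j : {x // x ∈ t}, n j.1 (xa j) ≠ 0)
    (hzt : zt = 1 / ∑ xa : Cfg S t, F xa * ∏ j : {x // x ∈ t}, n j.1 (xa j))
    (hτ : ∀ j ∈ t, τ j ≠ 0) :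
    z * ∑ xa : Cfg S t, F xa * ∏ j : {x // x ∈ t}, n j.1 (xa j) / τ j.1 = 1 ↔
      z = zt * ∏ j : {x // x ∈ t}, τ j.1 := by
  have hP : ∏ j : {x // x ∈ t}, τ j.1 ≠ 0 := prod_ne_zero_iff.2 fun j _ => hτ j.1 j.2
  rw [sum_mul_prod_div, hzt, mul_div_assoc', div_eq_one_iff_eq hP]
  field_simp

lemma rescaled_factor_eq_iff [∀ i, DecidableEq (S i)] {i : ι} (hi : i ∈ t) (xi : S i)
    {m ω κ z zt : K}
    (hm : m = ω * ∑ xa : Cfg S t, (if xa ⟨i, hi⟩ = xi then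
      F xa * ∏ j ∈ univ.filter (fun j : {x // x ∈ t} => j.1 ≠ i), n j.1 (xa j) else 0))
    (hm0 : m ≠ 0) (hκ : κ ≠ 0) (hτ : ∀ j ∈ t, τ j ≠ 0)
    (hz : z = zt * ∏ j : {x // x ∈ t}, τ j.1) :
    m / κ = z * ∑ xa : Cfg S t, (if xa ⟨i, hi⟩ = xi then
      F xa * ∏ j ∈ univ.filter (fun j : {x // x ∈ t} => j.1 ≠ i), n j.1 (xa j) / τ j.1
      else 0) ↔ ω = κ * τ i * zt := by
  have hs := right_ne_zero_of_mul (hm ▸ hm0)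
  have hP : ∏ j ∈ univ.filter (fun j : {x // x ∈ t} => j.1 ≠ i), τ j.1 ≠ 0 :=
    prod_ne_zero_iff.2 fun j _ => hτ j.1 j.2
  rw [sum_ite_mul_prod_div, hz, prod_subtype_eq_mul_prod_filter_ne hi, hm]
  field_simp

end Rescaling

theorem statement0_general
    {ι α : Type} [Fintype α] [DecidableEq ι] [DecidableEq α]
    (S : ι → Type) [∀ i, Fintype (S i)] [∀ i, Nonempty (S i)] [∀ i, DecidableEq (S i)]
    (N : α → Finset ι)
    (f : ∀ a : α, Cfg S (N a) → ℝ)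
    (ω : α → ι → ℝ)
    (mt : α → ∀ i : ι, S i → ℝ) (nt : ∀ i : ι, α → S i → ℝ)
    (hmtpos : ∀ a : α, ∀ i ∈ N a, ∀ xi, 0 < mt a i xi)
    (hntpos : ∀ i : ι, ∀ a : α, i ∈ N a → ∀ xi, 0 < nt i a xi)
    (heqm : ∀ a : α, ∀ i : ι, ∀ hi : i ∈ N a, ∀ xi : S i,
      mt a i xi = ω a i * ∑ xa : Cfg S (N a),
        (if xa ⟨i, hi⟩ = xi then
          f a xa * ∏ j ∈ univ.filter (fun j : {x // x ∈ N a} => j.1 ≠ i), nt j.1 a (xa j)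
        else 0))
    (heqn : ∀ i : ι, ∀ a : α, i ∈ N a → ∀ xi : S i,
      nt i a xi = ∏ c ∈ (univ.filter (fun c : α => i ∈ N c)).erase a, mt c i xi)
    (zt : α → ℝ)
    (hden : ∀ a : α,
      0 < ∑ xa : Cfg S (N a), f a xa * ∏ j : {x // x ∈ N a}, nt j.1 a (xa j))
    (hzt : ∀ a : α,
      zt a = 1 / ∑ xa : Cfg S (N a), f a xa * ∏ j : {x // x ∈ N a}, nt j.1 a (xa j)) :
    (∃ (κ τ : α → ι → ℝ) (z : α → ℝ),
      (∀ a : α, ∀ i ∈ N a, 0 < κ a i) ∧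
      (∀ a : α, ∀ i ∈ N a, 0 < τ a i) ∧
      (∀ a : α, 0 < z a) ∧
      (∀ a : α,
        z a * ∑ xa : Cfg S (N a),
          f a xa * ∏ j : {x // x ∈ N a}, nt j.1 a (xa j) / τ a j.1 = 1) ∧
      (∀ a : α, ∀ i : ι, ∀ hi : i ∈ N a, ∀ xi : S i,
        mt a i xi / κ a i = z a * ∑ xa : Cfg S (N a),
          (if xa ⟨i, hi⟩ = xi then
            f a xa * ∏ j ∈ univ.filter (fun j : {x // x ∈ N a} => j.1 ≠ i),
              nt j.1 a (xa j) / τ a j.1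
          else 0)) ∧
      (∀ i : ι, ∀ a : α, i ∈ N a → ∀ xi : S i,
        nt i a xi / τ a i =
          ∏ c ∈ (univ.filter (fun c : α => i ∈ N c)).erase a, mt c i xi / κ c i))
    ↔ (∃ g : ι → ℝ, (∀ i, 0 < g i) ∧ ∀ a : α, ∀ i ∈ N a, ω a i = g i * zt a) := by
  have hmem {a i} (hi : i ∈ N a) : a ∈ univ.filter (fun c : α => i ∈ N c) :=
    mem_filter.2 ⟨mem_univ a, hi⟩
  constructor
  · rintro ⟨κ, τ, z, hκ, hτ, -, hnorm, hm, hn⟩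
    refine ⟨fun i => ∏ c ∈ univ.filter (fun c : α => i ∈ N c), κ c i,
      fun i => prod_pos fun c hc => hκ c i (mem_filter.1 hc).2, fun a i hi => ?_⟩
    obtain ⟨xi⟩ := ‹∀ i, Nonempty (S i)› i
    have hτ_eq := (div_eq_prod_div_iff (heqn i a hi xi) (hntpos i a hi xi).ne' (hτ a i hi).ne'
      fun c hc => (hκ c i (mem_filter.1 (mem_of_mem_erase hc)).2).ne').1 (hn i a hi xi)
    have hz_eq := (rescaled_normalization_iff (f a) (fun j => nt j a) (τ a) (hden a).ne' (hzt a)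
      fun j hj => (hτ a j hj).ne').1 (hnorm a)
    beta_reduce
    rw [← mul_prod_erase _ _ (hmem hi), ← hτ_eq]
    exact (rescaled_factor_eq_iff (f a) (fun j => nt j a) (τ a) hi xi (heqm a i hi xi)
      (hmtpos a i hi xi).ne' (hκ a i hi).ne' (fun j hj => (hτ a j hj).ne') hz_eq).1 (hm a i hi xi)
  · rintro ⟨g, hg, hωg⟩
    let κ : α → ι → ℝ := fun _ i => g i ^ (#(univ.filter fun c : α => i ∈ N c) : ℝ)⁻¹
    let τ : α → ι → ℝ := fun a i => ∏ c ∈ (univ.filter fun c : α => i ∈ N c).erase a, κ c i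
    have hκ a i : 0 < κ a i := Real.rpow_pos_of_pos (hg i) _
    have hτ a i : 0 < τ a i := prod_pos fun c _ => hκ c i
    have hκτ {a i} (hi : i ∈ N a) : κ a i * τ a i = g i := by
      rw [mul_prod_erase _ (fun c => κ c i) (hmem hi), prod_const,
        Real.rpow_inv_natCast_pow (hg i).le (card_ne_zero_of_mem (hmem hi))]
    have hzt_pos a : 0 < zt a := hzt a ▸ one_div_pos.2 (hden a)
    refine ⟨κ, τ, fun a => zt a * ∏ j : {x // x ∈ N a}, τ a j.1, fun a i _ => hκ a i,
      fun a i _ => hτ a i, fun a => mul_pos (hzt_pos a) (prod_pos fun j _ => hτ a j.1),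
      fun a => ?_, fun a i hi xi => ?_, fun i a hi xi => ?_⟩
    · exact (rescaled_normalization_iff (f a) (fun j => nt j a) (τ a) (hden a).ne' (hzt a)
        fun j _ => (hτ a j).ne').2 rfl
    · exact (rescaled_factor_eq_iff (f a) (fun j => nt j a) (τ a) hi xi (heqm a i hi xi)
        (hmtpos a i hi xi).ne' (hκ a i).ne' (fun j _ => (hτ a j).ne') rfl).2
        (by rw [hωg a i hi, hκτ hi])
    · exact (div_eq_prod_div_iff (heqn i a hi xi) (hntpos i a hi xi).ne' (hτ a i).ne'
        fun c _ => (hκ c i).ne').2 rfl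

theorem statement0
    {ι α : Type} [Fintype ι] [Fintype α] [DecidableEq ι] [DecidableEq α]
    (S : ι → Type) [∀ i, Fintype (S i)] [∀ i, Nonempty (S i)] [∀ i, DecidableEq (S i)]
    (N : α → Finset ι)
    (hNi : ∀ i : ι, ∃ a : α, i ∈ N a)
    (f : ∀ a : α, Cfg S (N a) → ℝ) (hf : ∀ a xa, 0 < f a xa)
    (ω : α → ι → ℝ) (hω : ∀ a : α, ∀ i ∈ N a, 0 < ω a i)
    (mt : α → ∀ i : ι, S i → ℝ) (nt : ∀ i : ι, α → S i → ℝ)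
    (hmtpos : ∀ a : α, ∀ i ∈ N a, ∀ xi, 0 < mt a i xi)
    (hntpos : ∀ i : ι, ∀ a : α, i ∈ N a → ∀ xi, 0 < nt i a xi)
    (heqm : ∀ a : α, ∀ i : ι, ∀ hi : i ∈ N a, ∀ xi : S i,
      mt a i xi = ω a i * ∑ xa : Cfg S (N a),
        (if xa ⟨i, hi⟩ = xi then
          f a xa * ∏ j ∈ univ.filter (fun j : {x // x ∈ N a} => j.1 ≠ i), nt j.1 a (xa j)
        else 0))
    (heqn : ∀ i : ι, ∀ a : α, i ∈ N a → ∀ xi : S i,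
      nt i a xi = ∏ c ∈ (univ.filter (fun c : α => i ∈ N c)).erase a, mt c i xi)
    (zt : α → ℝ)
    (hden : ∀ a : α,
      0 < ∑ xa : Cfg S (N a), f a xa * ∏ j : {x // x ∈ N a}, nt j.1 a (xa j))
    (hzt : ∀ a : α,
      zt a = 1 / ∑ xa : Cfg S (N a), f a xa * ∏ j : {x // x ∈ N a}, nt j.1 a (xa j)) :
    (∃ (κ τ : α → ι → ℝ) (z : α → ℝ),
      (∀ a : α, ∀ i ∈ N a, 0 < κ a i) ∧
      (∀ a : α, ∀ i ∈ N a, 0 < τ a i) ∧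
      (∀ a : α, 0 < z a) ∧
      (∀ a : α,
        z a * ∑ xa : Cfg S (N a),
          f a xa * ∏ j : {x // x ∈ N a}, nt j.1 a (xa j) / τ a j.1 = 1) ∧
      (∀ a : α, ∀ i : ι, ∀ hi : i ∈ N a, ∀ xi : S i,
        mt a i xi / κ a i = z a * ∑ xa : Cfg S (N a),
          (if xa ⟨i, hi⟩ = xi then
            f a xa * ∏ j ∈ univ.filter (fun j : {x // x ∈ N a} => j.1 ≠ i),
              nt j.1 a (xa j) / τ a j.1
          else 0)) ∧
      (∀ i : ι, ∀ a : α, i ∈ N a → ∀ xi : S i,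
        nt i a xi / τ a i =
          ∏ c ∈ (univ.filter (fun c : α => i ∈ N c)).erase a, mt c i xi / κ c i))
    ↔ (∃ g : ι → ℝ, (∀ i, 0 < g i) ∧ ∀ a : α, ∀ i ∈ N a, ω a i = g i * zt a) :=
  statement0_general S N f ω mt nt hmtpos hntpos heqm heqn zt hden hzt
end

section
/- (Lemma on hard constraints, part 1.) Suppose f_a ≥ 0 with k_a := ∑_{x_a} f_a(x_a) > 0 for all a ∈ A_BP, f_a > 0 for all a ∈ A_MF, the beliefs b_i (i ∈ I) are probability mass functions on S_i, the beliefs b_a (a ∈ A_BP) are probability mass functions on the configurations x_a, and the marginalization constraints b_i(x_i) = ∑_{x_a\x_i} b_a(x_a) hold for all a ∈ A_BP, i ∈ N(a). Then, interpreting F_BP,MF as an extended-real-valued sum with the conventions 0·ln 0 = 0 and t·ln(t/0) = +∞ for t > 0, one has F_BP,MF ≥ −∑_{a∈A} ln k_a; in particular F_BP,MF > −∞. -/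
/-!
Each BP factor contributes a Kullback–Leibler divergence `∑ b_a ln (b_a / f_a) ≥ -ln k_a`
(Gibbs' inequality for the unnormalised `f_a`; it is `+∞` unless `supp b_a ⊆ supp f_a`).
Each MF factor contributes `-E_q[ln f_a] ≥ -ln k_a - ∑_{i ∈ N(a)} H(b_i)`, by Gibbs' inequality
for the product belief `q = ∏ b_i`, whose entropy is the sum of the `H(b_i)`. Collecting the
entropies, every `H(b_i) ≥ 0` appears with coefficient `|N_BP(i)| + |N_MF(i)| - 1 ≥ 0`.
-/

open Finset Real

namespace EReal

theorem coe_finset_sum {β : Type*} (s : Finset β) (g : β → ℝ) :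
    ((∑ x ∈ s, g x : ℝ) : EReal) = ∑ x ∈ s, (g x : EReal) :=
  map_sum (⟨⟨Real.toEReal, coe_zero⟩, coe_add⟩ : ℝ →+ EReal) g s

theorem sum_ne_bot {β : Type*} {s : Finset β} {g : β → EReal} (h : ∀ x ∈ s, g x ≠ ⊥) :
    ∑ x ∈ s, g x ≠ ⊥ :=
  Finset.sum_induction g (· ≠ ⊥) (fun _ _ hx hy => add_ne_bot_iff.2 ⟨hx, hy⟩) (by simp) h

theorem sum_eq_top_of_mem {β : Type*} {s : Finset β} {g : β → EReal} {x : β} (hx : x ∈ s)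
    (hgx : g x = ⊤) (h : ∀ y ∈ s, g y ≠ ⊥) : ∑ y ∈ s, g y = ⊤ := by
  classical
  rw [← add_sum_erase _ _ hx, hgx]
  exact top_add_of_ne_bot (sum_ne_bot fun y hy => h y (mem_of_mem_erase hy))

end EReal

theorem sub_div_sub_mul_log_le_mul_log_div {p q k : ℝ} (hp : 0 ≤ p) (hq : 0 ≤ q) (hk : 0 < k)
    (hpq : p ≠ 0 → q ≠ 0) : p - q / k - p * log k ≤ p * log (p / q) := by
  rcases hp.eq_or_lt with rfl | hp
  · simpa using div_nonneg hq hk.le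
  have hq : 0 < q := hq.lt_of_ne' (hpq hp.ne')
  calc p - q / k - p * log k = p * (1 - (p * k / q)⁻¹) - p * log k := by field_simp
    _ ≤ p * log (p * k / q) - p * log k := by
      gcongr
      exact one_sub_inv_le_log_of_pos (by positivity)
    _ = p * log (p / q) := by
      rw [show p * k / q = p / q * k by ring, log_mul (by positivity) hk.ne']
      ring

theorem neg_log_sum_le_sum_mul_log_div {β : Type*} [Fintype β] {p q : β → ℝ}
    (hp0 : ∀ x, 0 ≤ p x) (hp1 : ∑ x, p x = 1) (hq0 : ∀ x, 0 ≤ q x)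
    (hpq : ∀ x, p x ≠ 0 → q x ≠ 0) :
    -log (∑ x, q x) ≤ ∑ x, p x * log (p x / q x) := by
  have hk : 0 < ∑ x, q x := by
    obtain ⟨x, -, hx⟩ := exists_ne_zero_of_sum_ne_zero (hp1.trans_ne one_ne_zero)
    exact ((hq0 x).lt_of_ne' (hpq x hx)).trans_le
      (single_le_sum (fun y _ => hq0 y) (mem_univ x))
  calc -log (∑ x, q x) = ∑ x, (p x - q x / ∑ y, q y - p x * log (∑ y, q y)) := by
        rw [sum_sub_distrib, sum_sub_distrib, ← sum_div, ← sum_mul, hp1, div_self hk.ne']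
        ring
    _ ≤ ∑ x, p x * log (p x / q x) :=
      sum_le_sum fun x _ => sub_div_sub_mul_log_le_mul_log_div (hp0 x) (hq0 x) hk (hpq x)

theorem neg_log_sum_le_sum_ite_mul_log_div {β : Type*} [Fintype β] {p q : β → ℝ}
    (hp0 : ∀ x, 0 ≤ p x) (hp1 : ∑ x, p x = 1) (hq0 : ∀ x, 0 ≤ q x) :
    ((-log (∑ x, q x) : ℝ) : EReal) ≤ ∑ x, (if p x = 0 then (0 : EReal)
      else if q x = 0 then (⊤ : EReal) else ((p x * log (p x / q x) : ℝ) : EReal)) := by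
  by_cases hpq : ∀ x, p x ≠ 0 → q x ≠ 0
  · have hfinite : ∀ x, (if p x = 0 then (0 : EReal) else if q x = 0 then (⊤ : EReal)
        else ((p x * log (p x / q x) : ℝ) : EReal)) = ((p x * log (p x / q x) : ℝ) : EReal) := by
      intro x
      by_cases hx : p x = 0 <;> simp [hx, hpq x]
    rw [sum_congr rfl fun x _ => hfinite x, ← EReal.coe_finset_sum]
    exact EReal.coe_le_coe_iff.2 (neg_log_sum_le_sum_mul_log_div hp0 hp1 hq0 hpq)
  · push Not at hpq
    obtain ⟨x, hpx, hqx⟩ := hpq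
    rw [EReal.sum_eq_top_of_mem (mem_univ x) (by simp [hpx, hqx]) fun y _ => ?_]
    · exact le_top
    split_ifs <;> simp only [ne_eq, EReal.zero_ne_bot, top_ne_bot, EReal.coe_ne_bot,
      not_false_eq_true]

theorem sum_mul_log_nonpos {β : Type*} [Fintype β] {p : β → ℝ} (hp0 : ∀ x, 0 ≤ p x)
    (hp1 : ∑ x, p x = 1) : ∑ x, p x * log (p x) ≤ 0 :=
  sum_nonpos fun x _ => mul_log_nonpos (hp0 x) (hp1 ▸ single_le_sum (fun y _ => hp0 y) (mem_univ x))

section ProductBelief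

variable {β : Type*} [Fintype β] [DecidableEq β] {κ : β → Type*} [∀ j, Fintype (κ j)]
  {g : ∀ j, κ j → ℝ}

theorem sum_prod_apply_eq_one (hg : ∀ j, ∑ y, g j y = 1) : ∑ x : ∀ j, κ j, ∏ j, g j (x j) = 1 := by
  simp [← Fintype.prod_sum, hg]

theorem sum_prod_apply_mul_apply (hg : ∀ j, ∑ y, g j y = 1) (j : β) (h : κ j → ℝ) :
    ∑ x : ∀ j, κ j, (∏ j', g j' (x j')) * h (x j) = ∑ y, g j y * h y := by
  obtain ⟨G, hGj, hG⟩ : ∃ G : ∀ j, κ j → ℝ, G j = (fun y => g j y * h y) ∧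
      ∀ j' ∈ ({j}ᶜ : Finset β), G j' = g j' :=
    ⟨Function.update g j _, Function.update_self .., fun j' hj' =>
      Function.update_of_ne (by simpa using hj') _ _⟩
  have hprod : ∀ x : ∀ j, κ j, (∏ j', g j' (x j')) * h (x j) = ∏ j', G j' (x j') := by
    intro x
    rw [Fintype.prod_eq_mul_prod_compl j, Fintype.prod_eq_mul_prod_compl j,
      prod_congr rfl fun j' hj' => congrFun (hG j' hj') (x j'), hGj]
    ring
  rw [sum_congr rfl fun x _ => hprod x, ← Fintype.prod_sum, Fintype.prod_eq_mul_prod_compl j,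
    prod_congr rfl fun j' hj' => (congrArg (fun g' => ∑ y, g' y) (hG j' hj')).trans (hg j'),
    prod_const_one, mul_one, hGj]

theorem sum_prod_apply_mul_log_prod_apply (hg : ∀ j, ∑ y, g j y = 1) :
    ∑ x : ∀ j, κ j, (∏ j, g j (x j)) * log (∏ j, g j (x j)) = ∑ j, ∑ y, g j y * log (g j y) := by
  have hlog : ∀ x : ∀ j, κ j, (∏ j, g j (x j)) * log (∏ j, g j (x j))
      = ∑ j, (∏ j', g j' (x j')) * log (g j (x j)) := by
    intro x
    by_cases h : ∀ j, g j (x j) ≠ 0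
    · rw [log_prod fun j _ => h j, mul_sum]
    · push Not at h
      obtain ⟨j, hj⟩ := h
      simp [prod_eq_zero (f := fun j => g j (x j)) (mem_univ j) hj]
  rw [sum_congr rfl fun x _ => hlog x, sum_comm]
  exact sum_congr rfl fun j _ => sum_prod_apply_mul_apply hg j fun y => log (g j y)

theorem neg_log_sum_sub_le_neg_sum_prod_apply_mul_log (hg0 : ∀ j y, 0 ≤ g j y)
    (hg1 : ∀ j, ∑ y, g j y = 1) {f : (∀ j, κ j) → ℝ} (hf : ∀ x, 0 < f x) :
    -log (∑ x, f x) - ∑ j, ∑ y, g j y * log (g j y)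
      ≤ -∑ x, (∏ j, g j (x j)) * log (f x) := by
  have hgibbs := neg_log_sum_le_sum_mul_log_div (p := fun x : ∀ j, κ j => ∏ j, g j (x j))
    (fun x => prod_nonneg fun j _ => hg0 j (x j)) (sum_prod_apply_eq_one hg1)
    (fun x => (hf x).le) fun x _ => (hf x).ne'
  have hsplit : ∑ x : ∀ j, κ j, (∏ j, g j (x j)) * log ((∏ j, g j (x j)) / f x)
      = ∑ x : ∀ j, κ j, (∏ j, g j (x j)) * log (∏ j, g j (x j))
        - ∑ x, (∏ j, g j (x j)) * log (f x) := by
    rw [← sum_sub_distrib]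
    refine sum_congr rfl fun x _ => ?_
    rcases eq_or_ne (∏ j, g j (x j)) 0 with h | h
    · simp [h]
    · rw [log_div h (hf x).ne', mul_sub]
  rw [hsplit, sum_prod_apply_mul_log_prod_apply hg1] at hgibbs
  linarith

end ProductBelief

theorem sum_sum_coe_eq_sum_card_filter_mul {α ι R : Type*} [Fintype ι] [DecidableEq ι]
    [NonAssocSemiring R] (s : Finset α) (N : α → Finset ι) (e : ι → R) :
    ∑ a ∈ s, ∑ j : {x // x ∈ N a}, e j = ∑ i, #(s.filter fun c => i ∈ N c) * e i := by
  simp_rw [sum_coe_sort (N _) e]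
  rw [sum_comm' (t' := univ) (s' := fun i => s.filter fun c => i ∈ N c) (by simp)]
  simp [sum_const, nsmul_eq_mul]

theorem one_le_card_filter_add_card_filter {α ι : Type*} [DecidableEq ι] {s t : Finset α}
    {N : α → Finset ι} {i : ι} (hi : i ∈ s.biUnion N ∪ t.biUnion N) :
    1 ≤ #(s.filter fun c => i ∈ N c) + #(t.filter fun c => i ∈ N c) := by
  simp only [mem_union, mem_biUnion] at hi
  rcases hi with ⟨a, ha, hia⟩ | ⟨a, ha, hia⟩
  · have : 0 < #(s.filter fun c => i ∈ N c) := card_pos.2 ⟨a, mem_filter.2 ⟨ha, hia⟩⟩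
    omega
  · have : 0 < #(t.filter fun c => i ∈ N c) := card_pos.2 ⟨a, mem_filter.2 ⟨ha, hia⟩⟩
    omega

theorem sum_card_mul_add_sum_card_sub_one_mul_nonpos {ι : Type*} [Fintype ι] {b m : ι → ℕ}
    {e : ι → ℝ} (hbm : ∀ i, 1 ≤ b i + m i) (he : ∀ i, e i ≤ 0) :
    ∑ i, (m i : ℝ) * e i + ∑ i, ((b i : ℝ) - 1) * e i ≤ 0 := by
  rw [← sum_add_distrib]
  refine sum_nonpos fun i _ => ?_
  have hc : (1 : ℝ) ≤ b i + m i := by exact_mod_cast hbm i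
  nlinarith [he i]

theorem statement4_general
    {ι α : Type} [Fintype ι] [Fintype α] [DecidableEq ι] [DecidableEq α]
    (S : ι → Type) [∀ i, Fintype (S i)]
    (N : α → Finset ι) (αBP αMF : Finset α)
    (hdisj : Disjoint αBP αMF) (hcov : αBP ∪ αMF = Finset.univ)
    (hIcov : ∀ i : ι, i ∈ αBP.biUnion N ∪ αMF.biUnion N)
    (f : ∀ a : α, Cfg S (N a) → ℝ)
    (hfBP : ∀ a ∈ αBP, ∀ xa, 0 ≤ f a xa)
    (hfMF : ∀ a ∈ αMF, ∀ xa, 0 < f a xa)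
    (ba : ∀ a : α, Cfg S (N a) → ℝ) (bi : ∀ i : ι, S i → ℝ)
    (hba0 : ∀ a ∈ αBP, ∀ xa, 0 ≤ ba a xa)
    (hba1 : ∀ a ∈ αBP, ∑ xa : Cfg S (N a), ba a xa = 1)
    (hbi0 : ∀ i : ι, ∀ xi, 0 ≤ bi i xi)
    (hbi1 : ∀ i : ι, ∑ xi : S i, bi i xi = 1)
    (F : EReal)
    (hF : F = (∑ a ∈ αBP, ∑ xa : Cfg S (N a),
          (if ba a xa = 0 then (0 : EReal)
           else if f a xa = 0 then (⊤ : EReal)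
           else ((ba a xa * Real.log (ba a xa / f a xa) : ℝ) : EReal)))
        + (((-(∑ a ∈ αMF, ∑ xa : Cfg S (N a),
            (∏ j : {x // x ∈ N a}, bi j.1 (xa j)) * Real.log (f a xa))) : ℝ) : EReal)
        + (((-(∑ i : ι, ((((αBP.filter (fun c => i ∈ N c)).card : ℝ) - 1) *
            ∑ xi : S i, bi i xi * Real.log (bi i xi)))) : ℝ) : EReal)) :
    (((-(∑ a : α, Real.log (∑ xa : Cfg S (N a), f a xa))) : ℝ) : EReal) ≤ F ∧
      (⊥ : EReal) < F := by
  suffices hle : (((-(∑ a : α, log (∑ xa : Cfg S (N a), f a xa))) : ℝ) : EReal) ≤ F from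
    ⟨hle, (EReal.bot_lt_coe _).trans_le hle⟩
  have hBP := sum_le_sum fun a ha =>
    neg_log_sum_le_sum_ite_mul_log_div (hba0 a ha) (hba1 a ha) (hfBP a ha)
  rw [← EReal.coe_finset_sum] at hBP
  rw [hF]
  refine le_trans ?_ (add_le_add (add_le_add hBP le_rfl) le_rfl)
  rw [← EReal.coe_add, ← EReal.coe_add, EReal.coe_le_coe_iff]
  have hMF := sum_le_sum fun a ha =>
    neg_log_sum_sub_le_neg_sum_prod_apply_mul_log (fun j => hbi0 j.1) (fun j => hbi1 j.1)
      (hfMF a ha)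
  simp only [sum_sub_distrib, sum_neg_distrib] at hMF ⊢
  rw [sum_sum_coe_eq_sum_card_filter_mul αMF N fun i => ∑ y : S i, bi i y * log (bi i y)] at hMF
  have hent := sum_card_mul_add_sum_card_sub_one_mul_nonpos
    (fun i => one_le_card_filter_add_card_filter (hIcov i)) fun i =>
      sum_mul_log_nonpos (hbi0 i) (hbi1 i)
  rw [← hcov, sum_union hdisj]
  linarith

theorem statement4
    {ι α : Type} [Fintype ι] [Fintype α] [DecidableEq ι] [DecidableEq α]
    (S : ι → Type) [∀ i, Fintype (S i)] [∀ i, Nonempty (S i)] [∀ i, DecidableEq (S i)]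
    (N : α → Finset ι) (αBP αMF : Finset α)
    (hdisj : Disjoint αBP αMF) (hcov : αBP ∪ αMF = Finset.univ)
    (hIcov : ∀ i : ι, i ∈ αBP.biUnion N ∪ αMF.biUnion N)
    (f : ∀ a : α, Cfg S (N a) → ℝ)
    (hfBP : ∀ a ∈ αBP, ∀ xa, 0 ≤ f a xa)
    (hkBP : ∀ a ∈ αBP, 0 < ∑ xa : Cfg S (N a), f a xa)
    (hfMF : ∀ a ∈ αMF, ∀ xa, 0 < f a xa)
    (ba : ∀ a : α, Cfg S (N a) → ℝ) (bi : ∀ i : ι, S i → ℝ)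
    (hba0 : ∀ a ∈ αBP, ∀ xa, 0 ≤ ba a xa)
    (hba1 : ∀ a ∈ αBP, ∑ xa : Cfg S (N a), ba a xa = 1)
    (hbi0 : ∀ i : ι, ∀ xi, 0 ≤ bi i xi)
    (hbi1 : ∀ i : ι, ∑ xi : S i, bi i xi = 1)
    (hmarg : ∀ a ∈ αBP, ∀ i : ι, ∀ hi : i ∈ N a, ∀ xi : S i,
      bi i xi = ∑ xa : Cfg S (N a), (if xa ⟨i, hi⟩ = xi then ba a xa else 0))
    (F : EReal)
    (hF : F = (∑ a ∈ αBP, ∑ xa : Cfg S (N a),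
          (if ba a xa = 0 then (0 : EReal)
           else if f a xa = 0 then (⊤ : EReal)
           else ((ba a xa * Real.log (ba a xa / f a xa) : ℝ) : EReal)))
        + (((-(∑ a ∈ αMF, ∑ xa : Cfg S (N a),
            (∏ j : {x // x ∈ N a}, bi j.1 (xa j)) * Real.log (f a xa))) : ℝ) : EReal)
        + (((-(∑ i : ι, ((((αBP.filter (fun c => i ∈ N c)).card : ℝ) - 1) *
            ∑ xi : S i, bi i xi * Real.log (bi i xi)))) : ℝ) : EReal)) :
    (((-(∑ a : α, Real.log (∑ xa : Cfg S (N a), f a xa))) : ℝ) : EReal) ≤ F ∧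
      (⊥ : EReal) < F :=
  statement4_general S N αBP αMF hdisj hcov hIcov f hfBP hfMF ba bi hba0 hba1 hbi0 hbi1 F hF
end

section
/- Suppose all factors f_a are positive, and suppose the positive messages n_{i→a}, m^BP_{a→i} (a ∈ A_BP), m^MF_{a→i} (a ∈ A_MF) together with positive constants z_i (i ∈ I, with z_i = 1 for i ∈ I_BP) and z_a (a ∈ A_BP) satisfy the combined BP–MF fixed-point equations: n_{i→a}(x_i) = z_i ∏_{c∈N_BP(i)\a} m^BP_{c→i}(x_i) · ∏_{c∈N_MF(i)} m^MF_{c→i}(x_i) for all a ∈ A, i ∈ N(a); m^BP_{a→i}(x_i) = z_a ∑_{x_a\x_i} f_a(x_a) ∏_{j∈N(a)\i} n_{j→a}(x_j) for all a ∈ A_BP, i ∈ N(a); and m^MF_{a→i}(x_i) = exp( ∑_{x_a\x_i} (∏_{j∈N(a)\i} n_{j→a}(x_j)) ln f_a(x_a) ) for all a ∈ A_MF, i ∈ N(a). Define the beliefs b_a(x_a) := z_a f_a(x_a) ∏_{i∈N(a)} n_{i→a}(x_i) for a ∈ A_BP and b_i(x_i) := z_i ∏_{a∈N_BP(i)} m^BP_{a→i}(x_i)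 · ∏_{a∈N_MF(i)} m^MF_{a→i}(x_i) for i ∈ I. Then the marginalization constraints b_i(x_i) = ∑_{x_a\x_i} b_a(x_a) hold for all a ∈ A_BP and i ∈ N(a), and if in addition the z_a and z_i are the normalizing constants (i.e., ∑_{x_a} b_a(x_a) = 1 for a ∈ A_BP and ∑_{x_i} b_i(x_i) = 1 for i ∈ I_MF\I_BP), then all beliefs b_i (i ∈ I) are normalized to one. -/
/-!
At a BP factor `a` the belief `b_a`, restricted to the slice `x_i = ξ`, has the incoming
message `n_{i→a}(ξ)` as a constant factor; what remains is exactly the sum defining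
`m^BP_{a→i}(ξ) / z_a`. Hence `∑_{x_a \ x_i} b_a = n_{i→a} · m^BP_{a→i}`, and this product is `b_i`
because `n_{i→a}` is `b_i` with the factor `m^BP_{a→i}` left out. Normalization then transfers from
`b_a` to each `b_i` with `i ∈ I_BP` by summing the marginalization constraint over `x_i`; the
remaining variables are normalized by assumption.
-/

open Finset

theorem sum_eq_sum_of_marginal {β γ M : Type*} [Fintype β] [Fintype γ] [DecidableEq γ]
    [AddCommMonoid M] (p : β → γ) {bγ : γ → M} {bβ : β → M}
    (h : ∀ y, bγ y = ∑ x, if p x = y then bβ x else 0) :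
    ∑ y, bγ y = ∑ x, bβ x := by
  simp only [h]
  rw [sum_comm]
  exact sum_congr rfl fun x _ => Fintype.sum_ite_eq (p x) (fun _ => bβ x)

theorem prod_subtype_eq_mul_prod_ne {ι M : Type*} [DecidableEq ι] [CommMonoid M]
    {t : Finset ι} {i : ι} (hi : i ∈ t) (g : {x // x ∈ t} → M) :
    ∏ j, g j = g ⟨i, hi⟩ * ∏ j ∈ univ.filter (fun j : {x // x ∈ t} => j.1 ≠ i), g j := by
  have hne : univ.filter (fun j : {x // x ∈ t} => j.1 ≠ i) = univ.erase ⟨i, hi⟩ := by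
    ext j
    simp [Subtype.ext_iff]
  rw [hne, mul_prod_erase _ _ (mem_univ _)]

theorem sum_slice_mul_prod {ι : Type} {R : Type*} [DecidableEq ι] [CommSemiring R] {S : ι → Type}
    [∀ i, Fintype (S i)] [∀ i, DecidableEq (S i)] {t : Finset ι} {i : ι} (hi : i ∈ t)
    (ξ : S i) (w : Cfg S t → R) (n : ∀ j, S j → R) :
    ∑ xa : Cfg S t, (if xa ⟨i, hi⟩ = ξ then w xa * ∏ j, n j.1 (xa j) else 0) =
      n i ξ * ∑ xa : Cfg S t, (if xa ⟨i, hi⟩ = ξ then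
        w xa * ∏ j ∈ univ.filter (fun j : {x // x ∈ t} => j.1 ≠ i), n j.1 (xa j) else 0) := by
  rw [mul_sum]
  refine sum_congr rfl fun xa _ => ?_
  split_ifs with h
  · rw [prod_subtype_eq_mul_prod_ne hi, h]
    ring
  · rw [mul_zero]

theorem statement7_general
    {ι α : Type} [DecidableEq ι] [DecidableEq α]
    (S : ι → Type) [∀ i, Fintype (S i)] [∀ i, DecidableEq (S i)]
    (N : α → Finset ι) (αBP αMF : Finset α)
    (hIcov : ∀ i : ι, i ∈ αBP.biUnion N ∪ αMF.biUnion N)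
    (f : ∀ a : α, Cfg S (N a) → ℝ)
    (n : ∀ i : ι, α → S i → ℝ) (mBP mMF : α → ∀ i : ι, S i → ℝ)
    (zi : ι → ℝ) (za : α → ℝ)
    (hfpn : ∀ a : α, ∀ i ∈ N a, ∀ xi : S i,
      n i a xi = zi i *
        (∏ c ∈ (αBP.filter (fun c => i ∈ N c)).erase a, mBP c i xi) *
        ∏ c ∈ αMF.filter (fun c => i ∈ N c), mMF c i xi)
    (hfpBP : ∀ a ∈ αBP, ∀ i : ι, ∀ hi : i ∈ N a, ∀ xi : S i,
      mBP a i xi = za a * ∑ xa : Cfg S (N a),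
        (if xa ⟨i, hi⟩ = xi then
          f a xa * ∏ j ∈ univ.filter (fun j : {x // x ∈ N a} => j.1 ≠ i), n j.1 a (xa j)
        else 0))
    (ba : ∀ a : α, Cfg S (N a) → ℝ) (bi : ∀ i : ι, S i → ℝ)
    (hba : ∀ a ∈ αBP, ∀ xa : Cfg S (N a),
      ba a xa = za a * f a xa * ∏ j : {x // x ∈ N a}, n j.1 a (xa j))
    (hbi : ∀ i : ι, ∀ xi : S i,
      bi i xi = zi i * (∏ a ∈ αBP.filter (fun c => i ∈ N c), mBP a i xi) *
        ∏ a ∈ αMF.filter (fun c => i ∈ N c), mMF a i xi) :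
    (∀ a ∈ αBP, ∀ i : ι, ∀ hi : i ∈ N a, ∀ xi : S i,
      bi i xi = ∑ xa : Cfg S (N a), (if xa ⟨i, hi⟩ = xi then ba a xa else 0)) ∧
    (((∀ a ∈ αBP, ∑ xa : Cfg S (N a), ba a xa = 1) ∧
      (∀ i ∈ αMF.biUnion N \ αBP.biUnion N, ∑ xi : S i, bi i xi = 1)) →
      ∀ i : ι, ∑ xi : S i, bi i xi = 1) := by
  have hbi_eq_mul : ∀ a ∈ αBP, ∀ i ∈ N a, ∀ xi : S i, bi i xi = n i a xi * mBP a i xi := by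
    intro a ha i hi xi
    rw [hbi, hfpn a i hi, ← mul_prod_erase _ _ (mem_filter.2 ⟨ha, hi⟩)]
    ring
  have hmarg : ∀ a ∈ αBP, ∀ i : ι, ∀ hi : i ∈ N a, ∀ xi : S i,
      bi i xi = ∑ xa : Cfg S (N a), (if xa ⟨i, hi⟩ = xi then ba a xa else 0) := by
    intro a ha i hi xi
    simp only [hba a ha]
    rw [sum_slice_mul_prod hi xi _ (fun j => n j a), hbi_eq_mul a ha i hi, hfpBP a ha i hi]
    simp only [mul_sum, mul_ite, mul_zero, mul_assoc]
  refine ⟨hmarg, fun ⟨hBP, hMF⟩ i => ?_⟩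
  by_cases hb : i ∈ αBP.biUnion N
  · obtain ⟨a, ha, hi⟩ := mem_biUnion.mp hb
    rw [sum_eq_sum_of_marginal _ (hmarg a ha i hi), hBP a ha]
  · have hmf : i ∈ αMF.biUnion N := (mem_union.mp (hIcov i)).resolve_left hb
    exact hMF i (mem_sdiff.mpr ⟨hmf, hb⟩)

theorem statement7
    {ι α : Type} [Fintype ι] [Fintype α] [DecidableEq ι] [DecidableEq α]
    (S : ι → Type) [∀ i, Fintype (S i)] [∀ i, Nonempty (S i)] [∀ i, DecidableEq (S i)]
    (N : α → Finset ι) (αBP αMF : Finset α)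
    (hdisj : Disjoint αBP αMF) (hcov : αBP ∪ αMF = Finset.univ)
    (hIcov : ∀ i : ι, i ∈ αBP.biUnion N ∪ αMF.biUnion N)
    (f : ∀ a : α, Cfg S (N a) → ℝ) (hf : ∀ a xa, 0 < f a xa)
    (n : ∀ i : ι, α → S i → ℝ) (mBP mMF : α → ∀ i : ι, S i → ℝ)
    (hnpos : ∀ i : ι, ∀ a : α, i ∈ N a → ∀ xi, 0 < n i a xi)
    (hmBPpos : ∀ a ∈ αBP, ∀ i ∈ N a, ∀ xi, 0 < mBP a i xi)
    (hmMFpos : ∀ a ∈ αMF, ∀ i ∈ N a, ∀ xi, 0 < mMF a i xi)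
    (zi : ι → ℝ) (za : α → ℝ)
    (hzipos : ∀ i, 0 < zi i) (hziBP : ∀ i ∈ αBP.biUnion N, zi i = 1)
    (hzapos : ∀ a ∈ αBP, 0 < za a)
    (hfpn : ∀ a : α, ∀ i ∈ N a, ∀ xi : S i,
      n i a xi = zi i *
        (∏ c ∈ (αBP.filter (fun c => i ∈ N c)).erase a, mBP c i xi) *
        ∏ c ∈ αMF.filter (fun c => i ∈ N c), mMF c i xi)
    (hfpBP : ∀ a ∈ αBP, ∀ i : ι, ∀ hi : i ∈ N a, ∀ xi : S i,
      mBP a i xi = za a * ∑ xa : Cfg S (N a),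
        (if xa ⟨i, hi⟩ = xi then
          f a xa * ∏ j ∈ univ.filter (fun j : {x // x ∈ N a} => j.1 ≠ i), n j.1 a (xa j)
        else 0))
    (hfpMF : ∀ a ∈ αMF, ∀ i : ι, ∀ hi : i ∈ N a, ∀ xi : S i,
      mMF a i xi = Real.exp (∑ xa : Cfg S (N a),
        (if xa ⟨i, hi⟩ = xi then
          (∏ j ∈ univ.filter (fun j : {x // x ∈ N a} => j.1 ≠ i), n j.1 a (xa j)) *
            Real.log (f a xa)
        else 0)))
    (ba : ∀ a : α, Cfg S (N a) → ℝ) (bi : ∀ i : ι, S i → ℝ)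
    (hba : ∀ a ∈ αBP, ∀ xa : Cfg S (N a),
      ba a xa = za a * f a xa * ∏ j : {x // x ∈ N a}, n j.1 a (xa j))
    (hbi : ∀ i : ι, ∀ xi : S i,
      bi i xi = zi i * (∏ a ∈ αBP.filter (fun c => i ∈ N c), mBP a i xi) *
        ∏ a ∈ αMF.filter (fun c => i ∈ N c), mMF a i xi) :
    (∀ a ∈ αBP, ∀ i : ι, ∀ hi : i ∈ N a, ∀ xi : S i,
      bi i xi = ∑ xa : Cfg S (N a), (if xa ⟨i, hi⟩ = xi then ba a xa else 0)) ∧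
    (((∀ a ∈ αBP, ∑ xa : Cfg S (N a), ba a xa = 1) ∧
      (∀ i ∈ αMF.biUnion N \ αBP.biUnion N, ∑ xi : S i, bi i xi = 1)) →
      ∀ i : ι, ∑ xi : S i, bi i xi = 1) :=
  statement7_general S N αBP αMF hIcov f n mBP mMF zi za hfpn hfpBP ba bi hba hbi
end

section
/- (Fixed points are stationary points.) Suppose all factors f_a are positive and the positive messages n_{i→a}, m^BP_{a→i}, m^MF_{a→i} with positive constants z_i (z_i = 1 for i ∈ I_BP) and z_a satisfy the combined BP–MF fixed-point equations: n_{i→a}(x_i) = z_i ∏_{c∈N_BP(i)\a} m^BP_{c→i}(x_i) ∏_{c∈N_MF(i)} m^MF_{c→i}(x_i); m^BP_{a→i}(x_i) = z_a ∑_{x_a\x_i} f_a(x_a) ∏_{j∈N(a)\i} n_{j→a}(x_j) for a ∈ A_BP; m^MF_{a→i}(x_i) = exp(∑_{x_a\x_i} (∏_{j∈N(a)\i} n_{j→a}(x_j)) ln f_a(x_a)) for a ∈ A_MF. Define b_a(x_a) := z_a f_a(x_a) ∏_{i∈N(a)} n_{i→a}(x_i) (a ∈ A_BP) and b_i(x_i)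 := z_i ∏_{a∈N_BP(i)} m^BP_{a→i}(x_i) ∏_{a∈N_MF(i)} m^MF_{a→i}(x_i) (i ∈ I), and assume these are normalized probability mass functions. Then there exist real-valued functions λ_{a,i} on S_i (a ∈ A_BP, i ∈ N(a)) and real constants γ_i (i ∈ I_MF\I_BP) and γ_a (a ∈ A_BP) such that the stationarity equations hold: for all i ∈ I and all x_i, ln b_i(x_i) = ∑_{a∈N_BP(i)} λ_{a,i}(x_i) + ∑_{a∈N_MF(i)} ∑_{x_a\x_i} (∏_{j∈N(a)\i} b_j(x_j)) ln f_a(x_a) + |N_BP(i)| + 1_{I_MF\I_BP}(i)·γ_i − 1; and for all a ∈ A_BP and all x_a, ln b_a(x_a) = ln f_a(x_a) − ∑_{i∈N(a)} λ_{a,i}(x_i) + ∑_{i∈N(a)} ln b_i(x_i) + γ_a − 1. -/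
/-!
At a fixed point every belief factorises through the messages: for `a ∈ A_BP` and `i ∈ N(a)`,
`b_i = n_{i→a} m^BP_{a→i}`, and for `a ∈ A_MF` even `b_i = n_{i→a}`, so the mean-field exponent
computed with the beliefs `b_j` equals `ln m^MF_{a→i}`. Taking logarithms of `b_i` and `b_a` then
leaves only constants to match: choose `λ_{a,i} := ln m^BP_{a→i} + 1/|N_BP(i)| - 1`, so that the
`|N_BP(i)|` multipliers at `i` add up to `∑ ln m^BP_{a→i} + 1 - |N_BP(i)|`, and absorb the
normalisers `z_i`, `z_a` into `γ_i`, `γ_a` (for `i ∈ I_BP` there is no `γ_i`, but `z_i = 1`).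
-/

open Finset

namespace FactorGraph

theorem log_mul_prod {β : Type*} {s : Finset β} {z : ℝ} {g : β → ℝ} (hz : 0 < z)
    (hg : ∀ c ∈ s, 0 < g c) :
    Real.log (z * ∏ c ∈ s, g c) = Real.log z + ∑ c ∈ s, Real.log (g c) := by
  rw [Real.log_mul hz.ne' (prod_pos hg).ne', Real.log_prod fun c hc => (hg c hc).ne']

variable {ι α : Type} [DecidableEq ι] {S : ι → Type}
  {N : α → Finset ι} {αBP αMF : Finset α}

section Beliefs

variable [DecidableEq α] {zi : ℝ} {n : ∀ i : ι, α → S i → ℝ} {mBP mMF : α → ∀ i : ι, S i → ℝ}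
  {bi : ∀ i : ι, S i → ℝ} {a : α} {i : ι} {xi : S i}

theorem belief_eq_mul_of_mem_bp (ha : a ∈ αBP) (hi : i ∈ N a)
    (hbi : bi i xi = zi * (∏ c ∈ {c ∈ αBP | i ∈ N c}, mBP c i xi) *
      ∏ c ∈ {c ∈ αMF | i ∈ N c}, mMF c i xi)
    (hn : n i a xi = zi * (∏ c ∈ {c ∈ αBP | i ∈ N c}.erase a, mBP c i xi) *
      ∏ c ∈ {c ∈ αMF | i ∈ N c}, mMF c i xi) :
    bi i xi = n i a xi * mBP a i xi := by
  rw [hbi, hn, ← mul_prod_erase _ _ (mem_filter.mpr ⟨ha, hi⟩)]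
  ring

theorem belief_eq_of_mem_mf (hdisj : Disjoint αBP αMF) (ha : a ∈ αMF)
    (hbi : bi i xi = zi * (∏ c ∈ {c ∈ αBP | i ∈ N c}, mBP c i xi) *
      ∏ c ∈ {c ∈ αMF | i ∈ N c}, mMF c i xi)
    (hn : n i a xi = zi * (∏ c ∈ {c ∈ αBP | i ∈ N c}.erase a, mBP c i xi) *
      ∏ c ∈ {c ∈ αMF | i ∈ N c}, mMF c i xi) :
    bi i xi = n i a xi := by
  have ha' : a ∉ {c ∈ αBP | i ∈ N c} := fun h =>
    disjoint_left.mp hdisj (mem_filter.mp h).1 ha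
  rw [hbi, hn, erase_eq_of_notMem ha']

end Beliefs

noncomputable def bpMultiplier (αBP : Finset α) (N : α → Finset ι) (mBP : α → ∀ i : ι, S i → ℝ)
    (a : α) (i : ι) (xi : S i) : ℝ :=
  Real.log (mBP a i xi) + ((#{c ∈ αBP | i ∈ N c} : ℝ)⁻¹ - 1)

theorem log_factorBelief_stationary {f : ∀ a : α, Cfg S (N a) → ℝ} {n : ∀ i : ι, α → S i → ℝ}
    {mBP : α → ∀ i : ι, S i → ℝ} {ba : ∀ a : α, Cfg S (N a) → ℝ} {bi : ∀ i : ι, S i → ℝ}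
    {za : α → ℝ} {a : α} {xa : Cfg S (N a)}
    (hlog : Real.log (ba a xa) = Real.log (za a) + Real.log (f a xa)
      + ∑ j : {x // x ∈ N a}, Real.log (n j.1 a (xa j)))
    (hbi : ∀ j : {x // x ∈ N a},
      Real.log (bi j.1 (xa j)) = Real.log (n j.1 a (xa j)) + Real.log (mBP a j.1 (xa j))) :
    Real.log (ba a xa) = Real.log (f a xa)
      - ∑ j : {x // x ∈ N a}, bpMultiplier αBP N mBP a j.1 (xa j)
      + ∑ j : {x // x ∈ N a}, Real.log (bi j.1 (xa j))
      + (Real.log (za a) + 1 + ∑ j : {x // x ∈ N a}, ((#{c ∈ αBP | j.1 ∈ N c} : ℝ)⁻¹ - 1))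
      - 1 := by
  simp only [bpMultiplier, hbi, sum_add_distrib, hlog]
  ring

variable [∀ i, Fintype (S i)] [∀ i, DecidableEq (S i)]

/-- `∑_{x_a \ x_i} (∏_{j ∈ N(a) \ i} q_j(x_j)) ln g(x_a)`, for `t = N(a)` and `g = f_a`. -/
noncomputable def expectedLog {t : Finset ι} (g : Cfg S t → ℝ) (q : ∀ j : ι, S j → ℝ) (i : ι)
    (hi : i ∈ t) (xi : S i) : ℝ :=
  ∑ xa : Cfg S t, if xa ⟨i, hi⟩ = xi then
    (∏ j ∈ univ.filter (fun j : {x // x ∈ t} => j.1 ≠ i), q j.1 (xa j)) * Real.log (g xa)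
  else 0

theorem expectedLog_congr {t : Finset ι} {g : Cfg S t → ℝ} {q q' : ∀ j : ι, S j → ℝ}
    (h : ∀ j ∈ t, q j = q' j) (i : ι) (hi : i ∈ t) (xi : S i) :
    expectedLog g q i hi xi = expectedLog g q' i hi xi :=
  sum_congr rfl fun xa _ => by
    rw [prod_congr rfl fun j _ => congrFun (h j.1 j.2) (xa j)]

theorem log_varBelief_stationary {f : ∀ a : α, Cfg S (N a) → ℝ} {mBP mMF : α → ∀ i : ι, S i → ℝ}
    {bi : ∀ i : ι, S i → ℝ} {zi : ι → ℝ} {i : ι} {xi : S i}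
    (hIcov : i ∈ αBP.biUnion N ∪ αMF.biUnion N) (hziBP : i ∈ αBP.biUnion N → zi i = 1)
    (hlog : Real.log (bi i xi) = Real.log (zi i)
      + ∑ a ∈ {c ∈ αBP | i ∈ N c}, Real.log (mBP a i xi)
      + ∑ a ∈ {c ∈ αMF | i ∈ N c}, Real.log (mMF a i xi))
    (hMF : ∀ a ∈ αMF, ∀ hi : i ∈ N a, expectedLog (f a) bi i hi xi = Real.log (mMF a i xi)) :
    Real.log (bi i xi) = ∑ a ∈ {c ∈ αBP | i ∈ N c}, bpMultiplier αBP N mBP a i xi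
      + ∑ a ∈ {c ∈ αMF | i ∈ N c}, (if h : i ∈ N a then expectedLog (f a) bi i h xi else 0)
      + #{c ∈ αBP | i ∈ N c}
      + (if i ∈ αMF.biUnion N \ αBP.biUnion N then Real.log (zi i) + 1 else 0) - 1 := by
  have hMFsum : ∑ a ∈ {c ∈ αMF | i ∈ N c}, (if h : i ∈ N a then expectedLog (f a) bi i h xi else 0)
      = ∑ a ∈ {c ∈ αMF | i ∈ N c}, Real.log (mMF a i xi) :=
    sum_congr rfl fun a ha => by
      obtain ⟨ha, hi⟩ := mem_filter.mp ha
      rw [dif_pos hi, hMF a ha hi]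
  simp only [bpMultiplier, sum_add_distrib, sum_const, nsmul_eq_mul, hMFsum, hlog]
  by_cases hiBP : i ∈ αBP.biUnion N
  · obtain ⟨a, ha, hi⟩ := mem_biUnion.mp hiBP
    have hcard : (#{c ∈ αBP | i ∈ N c} : ℝ) ≠ 0 :=
      Nat.cast_ne_zero.mpr (card_ne_zero_of_mem (mem_filter.mpr ⟨ha, hi⟩))
    rw [if_neg (fun h => (mem_sdiff.mp h).2 hiBP), hziBP hiBP, Real.log_one]
    field_simp
    ring
  · have hempty : {c ∈ αBP | i ∈ N c} = ∅ :=
      filter_eq_empty_iff.mpr fun a ha hi => hiBP (mem_biUnion.mpr ⟨a, ha, hi⟩)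
    have hiMF : i ∈ αMF.biUnion N \ αBP.biUnion N :=
      mem_sdiff.mpr ⟨(mem_union.mp hIcov).resolve_left hiBP, hiBP⟩
    rw [if_pos hiMF, hempty]
    simp only [sum_empty, card_empty, Nat.cast_zero]
    ring

end FactorGraph

open FactorGraph

theorem statement8_general
    {ι α : Type} [DecidableEq ι] [DecidableEq α]
    (S : ι → Type) [∀ i, Fintype (S i)] [∀ i, DecidableEq (S i)]
    (N : α → Finset ι) (αBP αMF : Finset α)
    (hdisj : Disjoint αBP αMF)
    (hIcov : ∀ i : ι, i ∈ αBP.biUnion N ∪ αMF.biUnion N)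
    (f : ∀ a : α, Cfg S (N a) → ℝ) (hf : ∀ a xa, 0 < f a xa)
    (n : ∀ i : ι, α → S i → ℝ) (mBP mMF : α → ∀ i : ι, S i → ℝ)
    (hnpos : ∀ i : ι, ∀ a : α, i ∈ N a → ∀ xi, 0 < n i a xi)
    (hmBPpos : ∀ a ∈ αBP, ∀ i ∈ N a, ∀ xi, 0 < mBP a i xi)
    (hmMFpos : ∀ a ∈ αMF, ∀ i ∈ N a, ∀ xi, 0 < mMF a i xi)
    (zi : ι → ℝ) (za : α → ℝ)
    (hzipos : ∀ i, 0 < zi i) (hziBP : ∀ i ∈ αBP.biUnion N, zi i = 1)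
    (hzapos : ∀ a ∈ αBP, 0 < za a)
    (hfpn : ∀ a : α, ∀ i ∈ N a, ∀ xi : S i,
      n i a xi = zi i *
        (∏ c ∈ (αBP.filter (fun c => i ∈ N c)).erase a, mBP c i xi) *
        ∏ c ∈ αMF.filter (fun c => i ∈ N c), mMF c i xi)
    (hfpMF : ∀ a ∈ αMF, ∀ i : ι, ∀ hi : i ∈ N a, ∀ xi : S i,
      mMF a i xi = Real.exp (∑ xa : Cfg S (N a),
        (if xa ⟨i, hi⟩ = xi then
          (∏ j ∈ univ.filter (fun j : {x // x ∈ N a} => j.1 ≠ i), n j.1 a (xa j)) *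
            Real.log (f a xa)
        else 0)))
    (ba : ∀ a : α, Cfg S (N a) → ℝ) (bi : ∀ i : ι, S i → ℝ)
    (hba : ∀ a ∈ αBP, ∀ xa : Cfg S (N a),
      ba a xa = za a * f a xa * ∏ j : {x // x ∈ N a}, n j.1 a (xa j))
    (hbi : ∀ i : ι, ∀ xi : S i,
      bi i xi = zi i * (∏ a ∈ αBP.filter (fun c => i ∈ N c), mBP a i xi) *
        ∏ a ∈ αMF.filter (fun c => i ∈ N c), mMF a i xi) :
    ∃ (lam : α → ∀ i : ι, S i → ℝ) (γi : ι → ℝ) (γa : α → ℝ),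
      (∀ i : ι, ∀ xi : S i,
        Real.log (bi i xi) =
          (∑ a ∈ αBP.filter (fun c => i ∈ N c), lam a i xi)
          + (∑ a ∈ αMF.filter (fun c => i ∈ N c),
              if h : i ∈ N a then
                ∑ xa : Cfg S (N a),
                  (if xa ⟨i, h⟩ = xi then
                    (∏ j ∈ univ.filter (fun j : {x // x ∈ N a} => j.1 ≠ i),
                      bi j.1 (xa j)) * Real.log (f a xa)
                  else 0)
              else 0)
          + ((αBP.filter (fun c => i ∈ N c)).card : ℝ)
          + (if i ∈ αMF.biUnion N \ αBP.biUnion N then γi i else 0)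
          - 1) ∧
      (∀ a ∈ αBP, ∀ xa : Cfg S (N a),
        Real.log (ba a xa) =
          Real.log (f a xa)
          - (∑ j : {x // x ∈ N a}, lam a j.1 (xa j))
          + (∑ j : {x // x ∈ N a}, Real.log (bi j.1 (xa j)))
          + γa a - 1) := by
  have hmBPpos_nbr : ∀ i xi, ∀ a ∈ {c ∈ αBP | i ∈ N c}, 0 < mBP a i xi := fun i xi a ha =>
    hmBPpos a (mem_filter.mp ha).1 i (mem_filter.mp ha).2 xi
  have hmMFpos_nbr : ∀ i xi, ∀ a ∈ {c ∈ αMF | i ∈ N c}, 0 < mMF a i xi := fun i xi a ha =>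
    hmMFpos a (mem_filter.mp ha).1 i (mem_filter.mp ha).2 xi
  have hbi_mf : ∀ a ∈ αMF, ∀ i ∈ N a, bi i = n i a := fun a ha i hi => funext fun xi =>
    belief_eq_of_mem_mf hdisj ha (hbi i xi) (hfpn a i hi xi)
  refine ⟨bpMultiplier αBP N mBP, fun i => Real.log (zi i) + 1,
    fun a => Real.log (za a) + 1 + ∑ j : {x // x ∈ N a}, ((#{c ∈ αBP | j.1 ∈ N c} : ℝ)⁻¹ - 1),
    fun i xi => log_varBelief_stationary (mMF := mMF) (hIcov i) (hziBP i) ?_ fun a ha hi => ?_,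
    fun a ha xa => log_factorBelief_stationary (n := n) ?_ fun j => ?_⟩
  · rw [hbi, log_mul_prod (mul_pos (hzipos i) (prod_pos (hmBPpos_nbr i xi))) (hmMFpos_nbr i xi),
      log_mul_prod (hzipos i) (hmBPpos_nbr i xi)]
  · rw [hfpMF a ha i hi xi, Real.log_exp]
    exact expectedLog_congr (hbi_mf a ha) i hi xi
  · rw [hba a ha xa, log_mul_prod (mul_pos (hzapos a ha) (hf a xa)) fun j _ => hnpos j.1 a j.2 _,
      Real.log_mul (hzapos a ha).ne' (hf a xa).ne']
  · rw [belief_eq_mul_of_mem_bp ha j.2 (hbi _ _) (hfpn a j.1 j.2 _),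
      Real.log_mul (hnpos j.1 a j.2 _).ne' (hmBPpos a ha j.1 j.2 _).ne']

theorem statement8
    {ι α : Type} [Fintype ι] [Fintype α] [DecidableEq ι] [DecidableEq α]
    (S : ι → Type) [∀ i, Fintype (S i)] [∀ i, Nonempty (S i)] [∀ i, DecidableEq (S i)]
    (N : α → Finset ι) (αBP αMF : Finset α)
    (hdisj : Disjoint αBP αMF) (hcov : αBP ∪ αMF = Finset.univ)
    (hIcov : ∀ i : ι, i ∈ αBP.biUnion N ∪ αMF.biUnion N)
    (f : ∀ a : α, Cfg S (N a) → ℝ) (hf : ∀ a xa, 0 < f a xa)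
    (n : ∀ i : ι, α → S i → ℝ) (mBP mMF : α → ∀ i : ι, S i → ℝ)
    (hnpos : ∀ i : ι, ∀ a : α, i ∈ N a → ∀ xi, 0 < n i a xi)
    (hmBPpos : ∀ a ∈ αBP, ∀ i ∈ N a, ∀ xi, 0 < mBP a i xi)
    (hmMFpos : ∀ a ∈ αMF, ∀ i ∈ N a, ∀ xi, 0 < mMF a i xi)
    (zi : ι → ℝ) (za : α → ℝ)
    (hzipos : ∀ i, 0 < zi i) (hziBP : ∀ i ∈ αBP.biUnion N, zi i = 1)
    (hzapos : ∀ a ∈ αBP, 0 < za a)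
    (hfpn : ∀ a : α, ∀ i ∈ N a, ∀ xi : S i,
      n i a xi = zi i *
        (∏ c ∈ (αBP.filter (fun c => i ∈ N c)).erase a, mBP c i xi) *
        ∏ c ∈ αMF.filter (fun c => i ∈ N c), mMF c i xi)
    (hfpBP : ∀ a ∈ αBP, ∀ i : ι, ∀ hi : i ∈ N a, ∀ xi : S i,
      mBP a i xi = za a * ∑ xa : Cfg S (N a),
        (if xa ⟨i, hi⟩ = xi then
          f a xa * ∏ j ∈ univ.filter (fun j : {x // x ∈ N a} => j.1 ≠ i), n j.1 a (xa j)
        else 0))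
    (hfpMF : ∀ a ∈ αMF, ∀ i : ι, ∀ hi : i ∈ N a, ∀ xi : S i,
      mMF a i xi = Real.exp (∑ xa : Cfg S (N a),
        (if xa ⟨i, hi⟩ = xi then
          (∏ j ∈ univ.filter (fun j : {x // x ∈ N a} => j.1 ≠ i), n j.1 a (xa j)) *
            Real.log (f a xa)
        else 0)))
    (ba : ∀ a : α, Cfg S (N a) → ℝ) (bi : ∀ i : ι, S i → ℝ)
    (hba : ∀ a ∈ αBP, ∀ xa : Cfg S (N a),
      ba a xa = za a * f a xa * ∏ j : {x // x ∈ N a}, n j.1 a (xa j))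
    (hbi : ∀ i : ι, ∀ xi : S i,
      bi i xi = zi i * (∏ a ∈ αBP.filter (fun c => i ∈ N c), mBP a i xi) *
        ∏ a ∈ αMF.filter (fun c => i ∈ N c), mMF a i xi)
    (hbanorm : ∀ a ∈ αBP, ∑ xa : Cfg S (N a), ba a xa = 1)
    (hbinorm : ∀ i : ι, ∑ xi : S i, bi i xi = 1) :
    ∃ (lam : α → ∀ i : ι, S i → ℝ) (γi : ι → ℝ) (γa : α → ℝ),
      (∀ i : ι, ∀ xi : S i,
        Real.log (bi i xi) =
          (∑ a ∈ αBP.filter (fun c => i ∈ N c), lam a i xi)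
          + (∑ a ∈ αMF.filter (fun c => i ∈ N c),
              if h : i ∈ N a then
                ∑ xa : Cfg S (N a),
                  (if xa ⟨i, h⟩ = xi then
                    (∏ j ∈ univ.filter (fun j : {x // x ∈ N a} => j.1 ≠ i),
                      bi j.1 (xa j)) * Real.log (f a xa)
                  else 0)
              else 0)
          + ((αBP.filter (fun c => i ∈ N c)).card : ℝ)
          + (if i ∈ αMF.biUnion N \ αBP.biUnion N then γi i else 0)
          - 1) ∧
      (∀ a ∈ αBP, ∀ xa : Cfg S (N a),
        Real.log (ba a xa) =
          Real.log (f a xa)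
          - (∑ j : {x // x ∈ N a}, lam a j.1 (xa j))
          + (∑ j : {x // x ∈ N a}, Real.log (bi j.1 (xa j)))
          + γa a - 1) :=
  statement8_general S N αBP αMF hdisj hIcov f hf n mBP mMF hnpos hmBPpos hmMFpos zi za hzipos hziBP
    hzapos hfpn hfpMF ba bi hba hbi
end

section
/- (Stationary points are fixed points.) Suppose all factors f_a are positive, the beliefs b_i (i ∈ I) and b_a (a ∈ A_BP) are positive probability mass functions satisfying the marginalization constraints b_i(x_i) = ∑_{x_a\x_i} b_a(x_a) for all a ∈ A_BP, i ∈ N(a), and there exist real-valued functions λ_{a,i} on S_i (a ∈ A_BP, i ∈ N(a)) and real constants γ_i (i ∈ I_MF\I_BP), γ_a (a ∈ A_BP) such that: for all i ∈ I and all x_i, ln b_i(x_i) = ∑_{a∈N_BP(i)} λ_{a,i}(x_i) + ∑_{a∈N_MF(i)} ∑_{x_a\x_i} (∏_{j∈N(a)\i} b_j(x_j)) ln f_a(x_a) + |N_BP(i)| + 1_{I_MF\I_BP}(i)·γ_i − 1, and for all a ∈ A_BP and all x_a, ln b_a(x_a) = ln f_a(x_a) − ∑_{i∈N(a)} λ_{a,i}(x_i)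 + ∑_{i∈N(a)} ln b_i(x_i) + γ_a − 1. Then there exist positive messages n_{i→a}, m^BP_{a→i}, m^MF_{a→i} and positive constants z_i (with z_i = 1 for i ∈ I_BP) and z_a satisfying the combined BP–MF fixed-point equations: n_{i→a}(x_i) = z_i ∏_{c∈N_BP(i)\a} m^BP_{c→i}(x_i) ∏_{c∈N_MF(i)} m^MF_{c→i}(x_i) (a ∈ A, i ∈ N(a)); m^BP_{a→i}(x_i) = z_a ∑_{x_a\x_i} f_a(x_a) ∏_{j∈N(a)\i} n_{j→a}(x_j) (a ∈ A_BP); m^MF_{a→i}(x_i) = exp(∑_{x_a\x_i} (∏_{j∈N(a)\i} n_{j→a}(x_j)) ln f_a(x_a)) (a ∈ A_MF); such that b_a(x_a) = z_a f_a(x_a) ∏_{i∈N(a)} n_{i→a}(x_i) for all a ∈ A_BP and b_i(x_i) = z_i ∏_{a∈N_BP(i)} m^BP_{a→i}(x_i) ∏_{a∈N_MF(i)} m^MF_{a→i}(x_i) for all i ∈ I. -/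
open Finset

/-!
The messages are read off the Lagrange multipliers: `m^BP_{a→i} = exp (λ_{a,i} + 1 - 1/|N_BP(i)|)`,
`m^MF_{a→i}` is the mean-field message computed from the beliefs `b_j`, and `n_{i→a}` is the
product of all incoming messages except the one from `a`. The stationarity condition for `b_i`
then says that `b_i` is the product of its incoming messages, so `m^BP_{a→i} n_{i→a} = b_i`
for `a ∈ N_BP(i)` and `n_{i→a} = b_i` for `a ∈ A_MF`. Substituting this into the stationarity
condition for `b_a` gives `b_a ∝ f_a ∏ n_{i→a}`, and marginalizing that identity over `x_a \ x_i`
is the BP update; the MF update holds because `n_{j→a} = b_j` for mean-field factors.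
-/

noncomputable section

namespace FactorGraph

open Real

variable {ι α : Type} {S : ι → Type}

theorem prod_exp_add_one_sub_inv_card {s : Finset α} (hs : s.Nonempty) (l : α → ℝ) :
    ∏ a ∈ s, exp (l a + (1 - 1 / #s)) = exp (∑ a ∈ s, l a + #s - 1) := by
  have hcard : (#s : ℝ) ≠ 0 := by exact_mod_cast hs.card_pos.ne'
  rw [← exp_sum, sum_add_distrib, sum_const, nsmul_eq_mul]
  congr 1
  field_simp
  ring

theorem eq_mul_prod_of_log_eq {t : Finset ι} {b f : Cfg S t → ℝ} {q n l : ∀ i, S i → ℝ}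
    {c : ι → ℝ} {γ : ℝ} {xa : Cfg S t} (hb : 0 < b xa) (hf : 0 < f xa)
    (hq : ∀ j : {x // x ∈ t}, 0 < q j.1 (xa j))
    (hn : ∀ j : {x // x ∈ t}, exp (l j.1 (xa j) + c j.1) * n j.1 (xa j) = q j.1 (xa j))
    (hlog : log (b xa) = log (f xa) - ∑ j, l j.1 (xa j) + ∑ j, log (q j.1 (xa j)) + γ - 1) :
    b xa = exp (γ - 1 + ∑ j : {x // x ∈ t}, c j.1) * f xa * ∏ j, n j.1 (xa j) := by
  have hn_exp : ∀ j : {x // x ∈ t},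
      n j.1 (xa j) = exp (log (q j.1 (xa j)) - (l j.1 (xa j) + c j.1)) := by
    intro j
    rw [exp_sub, exp_log (hq j), eq_div_iff (exp_ne_zero _), mul_comm, hn j]
  rw [prod_congr rfl fun j _ => hn_exp j, ← exp_sum, ← exp_log hb, hlog, ← exp_log hf,
    ← exp_add, ← exp_add, log_exp]
  congr 1
  simp only [sum_sub_distrib, sum_add_distrib]
  ring

variable [DecidableEq ι] {N : α → Finset ι} {αBP αMF : Finset α}

theorem prod_eq_mul_prod_filter_ne {t : Finset ι} {M : Type} [CommMonoid M]
    (g : {x // x ∈ t} → M) {i : ι} (hi : i ∈ t) :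
    ∏ j, g j = g ⟨i, hi⟩ * ∏ j ∈ univ.filter (fun j : {x // x ∈ t} => j.1 ≠ i), g j := by
  have hcompl : univ.filter (fun j : {x // x ∈ t} => j.1 ≠ i) = {⟨i, hi⟩}ᶜ := by
    ext j; simp [Subtype.ext_iff]
  rw [hcompl, Fintype.prod_eq_mul_prod_compl]

/-- `m^BP_{a→i}`; the shift `1 - 1/|N_BP(i)|` absorbs the constant `|N_BP(i)| - 1` of the
stationarity condition for `b_i`. -/
def bpMessage (N : α → Finset ι) (αBP : Finset α) (lam : α → ∀ i, S i → ℝ) (a : α) (i : ι)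
    (xi : S i) : ℝ :=
  exp (lam a i xi + (1 - 1 / #(αBP.filter (fun c => i ∈ N c))))

def variableScale (N : α → Finset ι) (αBP : Finset α) (γi : ι → ℝ) (i : ι) : ℝ :=
  if i ∈ αBP.biUnion N then 1 else exp (γi i - 1)

def factorScale (N : α → Finset ι) (αBP : Finset α) (γa : α → ℝ) (a : α) : ℝ :=
  exp (γa a - 1 + ∑ j : {x // x ∈ N a}, (1 - 1 / (#(αBP.filter (fun c => j.1 ∈ N c)) : ℝ)))

theorem variableScale_pos (γi : ι → ℝ) (i : ι) : 0 < variableScale N αBP γi i := by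
  unfold variableScale; split_ifs <;> positivity

theorem variableScale_mul_prod_bpMessage (lam : α → ∀ i, S i → ℝ) (γi : ι → ℝ) {i : ι}
    (hIcov : i ∈ αBP.biUnion N ∪ αMF.biUnion N) (xi : S i) :
    variableScale N αBP γi i * ∏ a ∈ αBP.filter (fun c => i ∈ N c), bpMessage N αBP lam a i xi =
      exp (∑ a ∈ αBP.filter (fun c => i ∈ N c), lam a i xi + #(αBP.filter (fun c => i ∈ N c))
        + (if i ∈ αMF.biUnion N \ αBP.biUnion N then γi i else 0) - 1) := by
  by_cases hBP : i ∈ αBP.biUnion N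
  · have hne : (αBP.filter (fun c => i ∈ N c)).Nonempty := by
      obtain ⟨a, ha, hia⟩ := mem_biUnion.mp hBP
      exact ⟨a, mem_filter.mpr ⟨ha, hia⟩⟩
    have hMF : i ∉ αMF.biUnion N \ αBP.biUnion N := fun h => (mem_sdiff.mp h).2 hBP
    rw [variableScale, if_pos hBP, if_neg hMF, one_mul, add_zero]
    exact prod_exp_add_one_sub_inv_card hne _
  · have hempty : αBP.filter (fun c => i ∈ N c) = ∅ :=
      filter_eq_empty_iff.mpr fun a ha hia => hBP (mem_biUnion.mpr ⟨a, ha, hia⟩)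
    have hMF : i ∈ αMF.biUnion N \ αBP.biUnion N :=
      mem_sdiff.mpr ⟨(mem_union.mp hIcov).resolve_left hBP, hBP⟩
    simp only [variableScale, if_neg hBP, if_pos hMF, hempty, prod_empty, sum_empty,
      card_empty, Nat.cast_zero, mul_one]
    ring_nf

variable [∀ i, Fintype (S i)] [∀ i, DecidableEq (S i)]

def meanFieldExponent {t : Finset ι} (f : Cfg S t → ℝ) (q : ∀ i, S i → ℝ) (i : ι) (hi : i ∈ t)
    (xi : S i) : ℝ :=
  ∑ xa : Cfg S t, if xa ⟨i, hi⟩ = xi then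
    (∏ j ∈ univ.filter (fun j : {x // x ∈ t} => j.1 ≠ i), q j.1 (xa j)) * log (f xa) else 0

theorem eq_mul_sum_of_marginal {t : Finset ι} {b f : Cfg S t → ℝ} {n : ∀ i, S i → ℝ} {z : ℝ}
    (hb : ∀ xa, b xa = z * f xa * ∏ j, n j.1 (xa j)) {i : ι} (hi : i ∈ t) {m : S i → ℝ}
    {xi : S i} (hn : n i xi ≠ 0)
    (hm : m xi * n i xi = ∑ xa : Cfg S t, if xa ⟨i, hi⟩ = xi then b xa else 0) :
    m xi = z * ∑ xa : Cfg S t, if xa ⟨i, hi⟩ = xi then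
      f xa * ∏ j ∈ univ.filter (fun j : {x // x ∈ t} => j.1 ≠ i), n j.1 (xa j) else 0 := by
  rw [← mul_left_inj' hn, hm, mul_sum, sum_mul]
  refine sum_congr rfl fun xa _ => ?_
  split_ifs with hxa
  · rw [hb, prod_eq_mul_prod_filter_ne _ hi, hxa]
    ring
  · simp

def mfMessage (N : α → Finset ι) (f : ∀ a, Cfg S (N a) → ℝ) (bi : ∀ i, S i → ℝ) (a : α) (i : ι)
    (xi : S i) : ℝ :=
  exp (if h : i ∈ N a then meanFieldExponent (f a) bi i h xi else 0)

theorem mfMessage_eq_of_forall_eq {f : ∀ a, Cfg S (N a) → ℝ} {bi q : ∀ i, S i → ℝ} {a : α}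
    {i : ι} (hi : i ∈ N a) {xi : S i} (hq : ∀ j ∈ N a, ∀ xj, bi j xj = q j xj) :
    mfMessage N f bi a i xi = exp (meanFieldExponent (f a) q i hi xi) := by
  rw [mfMessage, dif_pos hi]
  unfold meanFieldExponent
  refine congrArg exp (sum_congr rfl fun xa _ => ?_)
  rw [prod_congr rfl fun j _ => hq j.1 j.2 (xa j)]

def variableBelief (N : α → Finset ι) (αBP αMF : Finset α) (f : ∀ a, Cfg S (N a) → ℝ)
    (bi : ∀ i, S i → ℝ) (lam : α → ∀ i, S i → ℝ) (γi : ι → ℝ) (i : ι) (xi : S i) : ℝ :=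
  variableScale N αBP γi i *
    (∏ a ∈ αBP.filter (fun c => i ∈ N c), bpMessage N αBP lam a i xi) *
    ∏ a ∈ αMF.filter (fun c => i ∈ N c), mfMessage N f bi a i xi

variable {f : ∀ a, Cfg S (N a) → ℝ} {bi : ∀ i, S i → ℝ} {lam : α → ∀ i, S i → ℝ} {γi : ι → ℝ}

theorem eq_variableBelief_of_log_eq {i : ι} (hIcov : i ∈ αBP.biUnion N ∪ αMF.biUnion N)
    {xi : S i} (hbi : 0 < bi i xi)
    (hstat : log (bi i xi) =
      ∑ a ∈ αBP.filter (fun c => i ∈ N c), lam a i xi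
        + ∑ a ∈ αMF.filter (fun c => i ∈ N c),
            (if h : i ∈ N a then meanFieldExponent (f a) bi i h xi else 0)
        + #(αBP.filter (fun c => i ∈ N c))
        + (if i ∈ αMF.biUnion N \ αBP.biUnion N then γi i else 0) - 1) :
    bi i xi = variableBelief N αBP αMF f bi lam γi i xi := by
  unfold variableBelief mfMessage
  rw [variableScale_mul_prod_bpMessage lam γi hIcov, ← exp_sum, ← exp_add, ← exp_log hbi, hstat]
  congr 1
  ring

variable [DecidableEq α]

def variableMessage (N : α → Finset ι) (αBP αMF : Finset α) (f : ∀ a, Cfg S (N a) → ℝ)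
    (bi : ∀ i, S i → ℝ) (lam : α → ∀ i, S i → ℝ) (γi : ι → ℝ) (i : ι) (a : α) (xi : S i) : ℝ :=
  variableScale N αBP γi i *
    (∏ c ∈ (αBP.filter (fun c => i ∈ N c)).erase a, bpMessage N αBP lam c i xi) *
    ∏ c ∈ αMF.filter (fun c => i ∈ N c), mfMessage N f bi c i xi

theorem variableMessage_pos (i : ι) (a : α) (xi : S i) :
    0 < variableMessage N αBP αMF f bi lam γi i a xi :=
  mul_pos (mul_pos (variableScale_pos γi i) (prod_pos fun _ _ => exp_pos _))
    (prod_pos fun _ _ => exp_pos _)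

theorem bpMessage_mul_variableMessage {a : α} (ha : a ∈ αBP) {i : ι} (hia : i ∈ N a) {xi : S i}
    (hbi : bi i xi = variableBelief N αBP αMF f bi lam γi i xi) :
    bpMessage N αBP lam a i xi * variableMessage N αBP αMF f bi lam γi i a xi = bi i xi := by
  rw [hbi, variableBelief, ← mul_prod_erase _ _ (mem_filter.mpr ⟨ha, hia⟩), variableMessage]
  ring

theorem variableMessage_of_notMem {a : α} (ha : a ∉ αBP) {i : ι} {xi : S i}
    (hbi : bi i xi = variableBelief N αBP αMF f bi lam γi i xi) :
    variableMessage N αBP αMF f bi lam γi i a xi = bi i xi := by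
  rw [hbi, variableBelief, variableMessage, erase_eq_of_notMem fun h => ha (mem_filter.mp h).1]

end FactorGraph

end

open FactorGraph in
theorem statement9_general
    {ι α : Type} [DecidableEq ι] [DecidableEq α]
    (S : ι → Type) [∀ i, Fintype (S i)] [∀ i, DecidableEq (S i)]
    (N : α → Finset ι) (αBP αMF : Finset α)
    (hdisj : Disjoint αBP αMF)
    (hIcov : ∀ i : ι, i ∈ αBP.biUnion N ∪ αMF.biUnion N)
    (f : ∀ a : α, Cfg S (N a) → ℝ) (hf : ∀ a xa, 0 < f a xa)
    (ba : ∀ a : α, Cfg S (N a) → ℝ) (bi : ∀ i : ι, S i → ℝ)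
    (hbapos : ∀ a ∈ αBP, ∀ xa, 0 < ba a xa)
    (hbipos : ∀ i : ι, ∀ xi, 0 < bi i xi)
    (hmarg : ∀ a ∈ αBP, ∀ i : ι, ∀ hi : i ∈ N a, ∀ xi : S i,
      bi i xi = ∑ xa : Cfg S (N a), (if xa ⟨i, hi⟩ = xi then ba a xa else 0))
    (lam : α → ∀ i : ι, S i → ℝ) (γi : ι → ℝ) (γa : α → ℝ)
    (hstat1 : ∀ i : ι, ∀ xi : S i,
      Real.log (bi i xi) =
        (∑ a ∈ αBP.filter (fun c => i ∈ N c), lam a i xi)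
        + (∑ a ∈ αMF.filter (fun c => i ∈ N c),
            if h : i ∈ N a then
              ∑ xa : Cfg S (N a),
                (if xa ⟨i, h⟩ = xi then
                  (∏ j ∈ univ.filter (fun j : {x // x ∈ N a} => j.1 ≠ i),
                    bi j.1 (xa j)) * Real.log (f a xa)
                else 0)
            else 0)
        + ((αBP.filter (fun c => i ∈ N c)).card : ℝ)
        + (if i ∈ αMF.biUnion N \ αBP.biUnion N then γi i else 0)
        - 1)
    (hstat2 : ∀ a ∈ αBP, ∀ xa : Cfg S (N a),
      Real.log (ba a xa) =
        Real.log (f a xa)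
        - (∑ j : {x // x ∈ N a}, lam a j.1 (xa j))
        + (∑ j : {x // x ∈ N a}, Real.log (bi j.1 (xa j)))
        + γa a - 1) :
    ∃ (n : ∀ i : ι, α → S i → ℝ) (mBP mMF : α → ∀ i : ι, S i → ℝ)
      (zi : ι → ℝ) (za : α → ℝ),
      (∀ i : ι, ∀ a : α, i ∈ N a → ∀ xi, 0 < n i a xi) ∧
      (∀ a ∈ αBP, ∀ i ∈ N a, ∀ xi, 0 < mBP a i xi) ∧
      (∀ a ∈ αMF, ∀ i ∈ N a, ∀ xi, 0 < mMF a i xi) ∧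
      (∀ i, 0 < zi i) ∧ (∀ i ∈ αBP.biUnion N, zi i = 1) ∧
      (∀ a ∈ αBP, 0 < za a) ∧
      (∀ a : α, ∀ i ∈ N a, ∀ xi : S i,
        n i a xi = zi i *
          (∏ c ∈ (αBP.filter (fun c => i ∈ N c)).erase a, mBP c i xi) *
          ∏ c ∈ αMF.filter (fun c => i ∈ N c), mMF c i xi) ∧
      (∀ a ∈ αBP, ∀ i : ι, ∀ hi : i ∈ N a, ∀ xi : S i,
        mBP a i xi = za a * ∑ xa : Cfg S (N a),
          (if xa ⟨i, hi⟩ = xi then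
            f a xa * ∏ j ∈ univ.filter (fun j : {x // x ∈ N a} => j.1 ≠ i), n j.1 a (xa j)
          else 0)) ∧
      (∀ a ∈ αMF, ∀ i : ι, ∀ hi : i ∈ N a, ∀ xi : S i,
        mMF a i xi = Real.exp (∑ xa : Cfg S (N a),
          (if xa ⟨i, hi⟩ = xi then
            (∏ j ∈ univ.filter (fun j : {x // x ∈ N a} => j.1 ≠ i), n j.1 a (xa j)) *
              Real.log (f a xa)
          else 0))) ∧
      (∀ a ∈ αBP, ∀ xa : Cfg S (N a),
        ba a xa = za a * f a xa * ∏ j : {x // x ∈ N a}, n j.1 a (xa j)) ∧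
      (∀ i : ι, ∀ xi : S i,
        bi i xi = zi i * (∏ a ∈ αBP.filter (fun c => i ∈ N c), mBP a i xi) *
          ∏ a ∈ αMF.filter (fun c => i ∈ N c), mMF a i xi) := by
  have hbi : ∀ i xi, bi i xi = variableBelief N αBP αMF f bi lam γi i xi := fun i xi =>
    eq_variableBelief_of_log_eq (hIcov i) (hbipos i xi) (hstat1 i xi)
  have hmsg : ∀ a ∈ αBP, ∀ i ∈ N a, ∀ xi, bpMessage N αBP lam a i xi *
      variableMessage N αBP αMF f bi lam γi i a xi = bi i xi := fun a ha i hi xi =>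
    bpMessage_mul_variableMessage ha hi (hbi i xi)
  have hba : ∀ a ∈ αBP, ∀ xa, ba a xa = factorScale N αBP γa a * f a xa *
      ∏ j, variableMessage N αBP αMF f bi lam γi j.1 a (xa j) := fun a ha xa =>
    eq_mul_prod_of_log_eq (n := fun j => variableMessage N αBP αMF f bi lam γi j a)
      (c := fun j => 1 - 1 / #(αBP.filter (fun c => j ∈ N c))) (hbapos a ha xa) (hf a xa)
      (fun j => hbipos _ _) (fun j => hmsg a ha j.1 j.2 (xa j)) (hstat2 a ha xa)
  refine ⟨variableMessage N αBP αMF f bi lam γi, bpMessage N αBP lam, mfMessage N f bi,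
    variableScale N αBP γi, factorScale N αBP γa, fun i a _ xi => variableMessage_pos i a xi,
    fun _ _ _ _ _ => Real.exp_pos _, fun _ _ _ _ _ => Real.exp_pos _, variableScale_pos γi,
    fun i hi => if_pos hi, fun _ _ => Real.exp_pos _, fun _ _ _ _ => rfl, ?_, ?_, hba, hbi⟩
  · intro a ha i hi xi
    exact eq_mul_sum_of_marginal (n := fun j => variableMessage N αBP αMF f bi lam γi j a)
      (hba a ha) hi (variableMessage_pos i a xi).ne'
      (by rw [hmsg a ha i hi xi, hmarg a ha i hi xi])
  · intro a ha i hi xi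
    exact mfMessage_eq_of_forall_eq hi fun j _ xj =>
      (variableMessage_of_notMem (disjoint_right.mp hdisj ha) (hbi j xj)).symm

theorem statement9
    {ι α : Type} [Fintype ι] [Fintype α] [DecidableEq ι] [DecidableEq α]
    (S : ι → Type) [∀ i, Fintype (S i)] [∀ i, Nonempty (S i)] [∀ i, DecidableEq (S i)]
    (N : α → Finset ι) (αBP αMF : Finset α)
    (hdisj : Disjoint αBP αMF) (hcov : αBP ∪ αMF = Finset.univ)
    (hIcov : ∀ i : ι, i ∈ αBP.biUnion N ∪ αMF.biUnion N)
    (f : ∀ a : α, Cfg S (N a) → ℝ) (hf : ∀ a xa, 0 < f a xa)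
    (ba : ∀ a : α, Cfg S (N a) → ℝ) (bi : ∀ i : ι, S i → ℝ)
    (hbapos : ∀ a ∈ αBP, ∀ xa, 0 < ba a xa)
    (hbipos : ∀ i : ι, ∀ xi, 0 < bi i xi)
    (hbanorm : ∀ a ∈ αBP, ∑ xa : Cfg S (N a), ba a xa = 1)
    (hbinorm : ∀ i : ι, ∑ xi : S i, bi i xi = 1)
    (hmarg : ∀ a ∈ αBP, ∀ i : ι, ∀ hi : i ∈ N a, ∀ xi : S i,
      bi i xi = ∑ xa : Cfg S (N a), (if xa ⟨i, hi⟩ = xi then ba a xa else 0))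
    (lam : α → ∀ i : ι, S i → ℝ) (γi : ι → ℝ) (γa : α → ℝ)
    (hstat1 : ∀ i : ι, ∀ xi : S i,
      Real.log (bi i xi) =
        (∑ a ∈ αBP.filter (fun c => i ∈ N c), lam a i xi)
        + (∑ a ∈ αMF.filter (fun c => i ∈ N c),
            if h : i ∈ N a then
              ∑ xa : Cfg S (N a),
                (if xa ⟨i, h⟩ = xi then
                  (∏ j ∈ univ.filter (fun j : {x // x ∈ N a} => j.1 ≠ i),
                    bi j.1 (xa j)) * Real.log (f a xa)
                else 0)
            else 0)
        + ((αBP.filter (fun c => i ∈ N c)).card : ℝ)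
        + (if i ∈ αMF.biUnion N \ αBP.biUnion N then γi i else 0)
        - 1)
    (hstat2 : ∀ a ∈ αBP, ∀ xa : Cfg S (N a),
      Real.log (ba a xa) =
        Real.log (f a xa)
        - (∑ j : {x // x ∈ N a}, lam a j.1 (xa j))
        + (∑ j : {x // x ∈ N a}, Real.log (bi j.1 (xa j)))
        + γa a - 1) :
    ∃ (n : ∀ i : ι, α → S i → ℝ) (mBP mMF : α → ∀ i : ι, S i → ℝ)
      (zi : ι → ℝ) (za : α → ℝ),
      (∀ i : ι, ∀ a : α, i ∈ N a → ∀ xi, 0 < n i a xi) ∧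
      (∀ a ∈ αBP, ∀ i ∈ N a, ∀ xi, 0 < mBP a i xi) ∧
      (∀ a ∈ αMF, ∀ i ∈ N a, ∀ xi, 0 < mMF a i xi) ∧
      (∀ i, 0 < zi i) ∧ (∀ i ∈ αBP.biUnion N, zi i = 1) ∧
      (∀ a ∈ αBP, 0 < za a) ∧
      (∀ a : α, ∀ i ∈ N a, ∀ xi : S i,
        n i a xi = zi i *
          (∏ c ∈ (αBP.filter (fun c => i ∈ N c)).erase a, mBP c i xi) *
          ∏ c ∈ αMF.filter (fun c => i ∈ N c), mMF c i xi) ∧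
      (∀ a ∈ αBP, ∀ i : ι, ∀ hi : i ∈ N a, ∀ xi : S i,
        mBP a i xi = za a * ∑ xa : Cfg S (N a),
          (if xa ⟨i, hi⟩ = xi then
            f a xa * ∏ j ∈ univ.filter (fun j : {x // x ∈ N a} => j.1 ≠ i), n j.1 a (xa j)
          else 0)) ∧
      (∀ a ∈ αMF, ∀ i : ι, ∀ hi : i ∈ N a, ∀ xi : S i,
        mMF a i xi = Real.exp (∑ xa : Cfg S (N a),
          (if xa ⟨i, hi⟩ = xi then
            (∏ j ∈ univ.filter (fun j : {x // x ∈ N a} => j.1 ≠ i), n j.1 a (xa j)) *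
              Real.log (f a xa)
          else 0))) ∧
      (∀ a ∈ αBP, ∀ xa : Cfg S (N a),
        ba a xa = za a * f a xa * ∏ j : {x // x ∈ N a}, n j.1 a (xa j)) ∧
      (∀ i : ι, ∀ xi : S i,
        bi i xi = zi i * (∏ a ∈ αBP.filter (fun c => i ∈ N c), mBP a i xi) *
          ∏ a ∈ αMF.filter (fun c => i ∈ N c), mMF a i xi) :=
  statement9_general S N αBP αMF hdisj hIcov f hf ba bi hbapos hbipos hmarg lam γi γa hstat1 hstat2
end

section
/- (Pure BP case.) Suppose A_MF = ∅, all factors f_a (a ∈ A) are positive, and the beliefs b_i (i ∈ I) and b_a (a ∈ A) are positive probability mass functions satisfying the marginalization constraints b_i(x_i) = ∑_{x_a\x_i} b_a(x_a) for all a ∈ A, i ∈ N(a). Then the following are equivalent: (1) there exist real-valued functions λ_{a,i} on S_i (a ∈ A, i ∈ N(a)) and real constants γ_a (a ∈ A) such that, for all i ∈ I, ln b_i(x_i) = ∑_{a∈N(i)} λ_{a,i}(x_i) + |N(i)| − 1, and for all a ∈ A, ln b_a(x_a) = ln f_a(x_a) − ∑_{i∈N(a)} λ_{a,i}(x_i)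 + ∑_{i∈N(a)} ln b_i(x_i) + γ_a − 1; (2) there exist positive messages m_{a→i}, n_{i→a} and positive constants z_a satisfying m_{a→i}(x_i) = z_a ∑_{x_a\x_i} f_a(x_a) ∏_{j∈N(a)\i} n_{j→a}(x_j) and n_{i→a}(x_i) = ∏_{c∈N(i)\a} m_{c→i}(x_i) for all a ∈ A, i ∈ N(a), such that b_a(x_a) = z_a f_a(x_a) ∏_{i∈N(a)} n_{i→a}(x_i) and b_i(x_i) = ∏_{a∈N(i)} m_{a→i}(x_i). -/
open Finset

/-!
Both conditions say that the beliefs factorize in the same way, once additively (in logarithms)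
and once multiplicatively. Put `m_{a→i} = exp (λ_{a,i} + (|N(i)| - 1) / |N(i)|)`, the shift
spreading the constant `|N(i)| - 1` of the variable equation evenly over the incoming messages,
and `n_{i→a} = ∏_{c ∈ N(i) \ a} m_{c→i}`. The variable equation of (1) then reads
`b_i = ∏_a m_{a→i} = m_{a→i} n_{i→a}`, and the factor equation becomes
`b_a = z_a f_a ∏_i n_{i→a}` with `z_a = exp (γ_a - 1 + ∑_{j ∈ N(a)} (|N(j)| - 1) / |N(j)|)`.
Marginalizing the latter over `x_a \ x_i` and dividing by
`n_{i→a}(x_i)` gives the message update for `m_{a→i}`. Conversely, taking logarithms of the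
belief equations of (2) recovers (1) with `λ_{a,i} = ln m_{a→i} - (|N(i)| - 1) / |N(i)|`.
-/

open Real

theorem Finset.sum_add_div_card {β K : Type*} [Field K] [CharZero K] {s : Finset β}
    (hs : s.Nonempty) (g : β → K) (t : K) :
    ∑ c ∈ s, (g c + t / #s) = ∑ c ∈ s, g c + t := by
  rw [sum_add_distrib, sum_const, nsmul_eq_mul,
    mul_div_cancel₀ _ (Nat.cast_ne_zero.2 hs.card_pos.ne')]

namespace FactorGraph

variable {ι α : Type} [Fintype α] [DecidableEq ι]
  {S : ι → Type} [∀ i, Fintype (S i)] [∀ i, DecidableEq (S i)]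

/-- The factors adjacent to the variable `i`, written `N(i)` in the paper. -/
def nbrs (N : α → Finset ι) (i : ι) : Finset α := univ.filter fun c => i ∈ N c

@[simp]
theorem mem_nbrs {N : α → Finset ι} {i : ι} {a : α} : a ∈ nbrs N i ↔ i ∈ N a := by
  simp [nbrs]

theorem filter_val_ne_eq_erase {t : Finset ι} {i : ι} (hi : i ∈ t) :
    univ.filter (fun j : {x // x ∈ t} => j.1 ≠ i) = univ.erase ⟨i, hi⟩ := by
  ext j
  simp [Subtype.ext_iff, and_comm]

/-- Pulling the incoming message `ν i` out of the marginal of `z F ∏ⱼ νⱼ` on `xᵢ` leaves the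
factor-to-variable message. -/
theorem eq_message_of_mul_eq_marginal {t : Finset ι} {F : Cfg S t → ℝ} {ν : ∀ i, S i → ℝ}
    {z μ : ℝ} {i : ι} (hi : i ∈ t) {xi : S i} (hν : ν i xi ≠ 0)
    (hmarg : μ * ν i xi =
      ∑ x : Cfg S t, if x ⟨i, hi⟩ = xi then z * F x * ∏ j, ν j.1 (x j) else 0) :
    μ = z * ∑ x : Cfg S t,
      if x ⟨i, hi⟩ = xi then F x * ∏ j ∈ univ.filter (fun j : {x // x ∈ t} => j.1 ≠ i),
        ν j.1 (x j) else 0 := by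
  refine mul_right_cancel₀ hν ?_
  rw [hmarg, mul_sum, sum_mul]
  refine sum_congr rfl fun x _ => ?_
  split_ifs with hx
  · rw [filter_val_ne_eq_erase hi, ← mul_prod_erase univ _ (mem_univ ⟨i, hi⟩), hx]
    ring
  · simp

variable [DecidableEq α] (N : α → Finset ι) (f ba : ∀ a : α, Cfg S (N a) → ℝ)
  (bi : ∀ i : ι, S i → ℝ)

/-- Condition (1): stationarity of the Bethe Lagrangian, with multipliers `lam a i` for the
marginalization constraints and `γ a` for the normalization of `ba a`. -/
def IsBetheStationary (lam : α → ∀ i : ι, S i → ℝ) (γ : α → ℝ) : Prop :=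
  (∀ i xi, log (bi i xi) = ∑ a ∈ nbrs N i, lam a i xi + (#(nbrs N i) : ℝ) - 1) ∧
  ∀ a (xa : Cfg S (N a)), log (ba a xa) = log (f a xa) - ∑ j : {x // x ∈ N a}, lam a j.1 (xa j)
    + ∑ j : {x // x ∈ N a}, log (bi j.1 (xa j)) + γ a - 1

/-- Condition (2): a positive fixed point of belief propagation whose beliefs are `ba, bi`. -/
def IsBPFixedPoint (m : α → ∀ i : ι, S i → ℝ) (n : ∀ i : ι, α → S i → ℝ) (z : α → ℝ) :
    Prop :=
  (∀ a, ∀ i ∈ N a, ∀ xi, 0 < m a i xi) ∧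
  (∀ i a, i ∈ N a → ∀ xi, 0 < n i a xi) ∧
  (∀ a, 0 < z a) ∧
  (∀ a i (hi : i ∈ N a) xi, m a i xi = z a * ∑ xa : Cfg S (N a),
    if xa ⟨i, hi⟩ = xi then
      f a xa * ∏ j ∈ univ.filter (fun j : {x // x ∈ N a} => j.1 ≠ i), n j.1 a (xa j)
    else 0) ∧
  (∀ i a, i ∈ N a → ∀ xi, n i a xi = ∏ c ∈ (nbrs N i).erase a, m c i xi) ∧
  (∀ a xa, ba a xa = z a * f a xa * ∏ j : {x // x ∈ N a}, n j.1 a (xa j)) ∧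
  (∀ i xi, bi i xi = ∏ a ∈ nbrs N i, m a i xi)

variable {N f ba bi}

theorem exists_isBPFixedPoint_of_isBetheStationary (hN : ∀ i, (nbrs N i).Nonempty)
    (hf : ∀ a xa, 0 < f a xa) (hba : ∀ a xa, 0 < ba a xa) (hbi : ∀ i xi, 0 < bi i xi)
    (hmarg : ∀ a i (hi : i ∈ N a) xi,
      bi i xi = ∑ xa : Cfg S (N a), if xa ⟨i, hi⟩ = xi then ba a xa else 0)
    {lam : α → ∀ i : ι, S i → ℝ} {γ : α → ℝ} (h : IsBetheStationary N f ba bi lam γ) :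
    ∃ m n z, IsBPFixedPoint N f ba bi m n z := by
  obtain ⟨hvar, hfac⟩ := h
  set c : ι → ℝ := fun i => (#(nbrs N i) - 1 : ℝ) / #(nbrs N i)
  set m : α → ∀ i : ι, S i → ℝ := fun a i xi => exp (lam a i xi + c i)
  set n : ∀ i : ι, α → S i → ℝ := fun i a xi => ∏ b ∈ (nbrs N i).erase a, m b i xi
  set z : α → ℝ := fun a => exp (γ a - 1 + ∑ j : {x // x ∈ N a}, c j)
  have hbi_prod : ∀ i xi, bi i xi = ∏ a ∈ nbrs N i, m a i xi := fun i xi => by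
    rw [← exp_sum, sum_add_div_card (hN i), ← add_sub_assoc, ← hvar, exp_log (hbi i xi)]
  have hbi_split : ∀ a i, i ∈ N a → ∀ xi, bi i xi = m a i xi * n i a xi := fun a i hi xi =>
    (hbi_prod i xi).trans (mul_prod_erase _ (fun b => m b i xi) (mem_nbrs.2 hi)).symm
  have hba_prod : ∀ a xa, ba a xa = z a * f a xa * ∏ j : {x // x ∈ N a}, n j.1 a (xa j) := by
    intro a xa
    have hn : ∀ j : {x // x ∈ N a},
        n j.1 a (xa j) = exp (log (bi j.1 (xa j)) - (lam a j.1 (xa j) + c j.1)) := fun j => by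
      rw [exp_sub, exp_log (hbi _ _), hbi_split a j.1 j.2, mul_div_cancel_left₀ _ (exp_pos _).ne']
    rw [prod_congr rfl fun j _ => hn j, ← exp_sum, ← exp_log (hf a xa), ← exp_add, ← exp_add,
      ← exp_log (hba a xa), hfac]
    congr 1
    simp only [sum_sub_distrib, sum_add_distrib]
    ring
  have hn_pos : ∀ i a xi, 0 < n i a xi := fun _ _ _ => prod_pos fun _ _ => exp_pos _
  refine ⟨m, n, z, fun _ _ _ _ => exp_pos _, fun i a _ xi => hn_pos i a xi, fun _ => exp_pos _,
    fun a i hi xi => ?_, fun _ _ _ _ => rfl, hba_prod, hbi_prod⟩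
  refine eq_message_of_mul_eq_marginal (μ := m a i xi) (z := z a) (F := f a)
    (ν := fun j => n j a) hi (hn_pos i a xi).ne' ?_
  rw [← hbi_split a i hi, hmarg a i hi xi]
  exact sum_congr rfl fun xa _ => by rw [hba_prod]

theorem exists_isBetheStationary_of_isBPFixedPoint (hN : ∀ i, (nbrs N i).Nonempty)
    (hf : ∀ a xa, 0 < f a xa) {m : α → ∀ i : ι, S i → ℝ} {n : ∀ i : ι, α → S i → ℝ}
    {z : α → ℝ} (h : IsBPFixedPoint N f ba bi m n z) :
    ∃ lam γ, IsBetheStationary N f ba bi lam γ := by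
  obtain ⟨hm, hn, hz, -, hn_prod, hba, hbi⟩ := h
  set c : ι → ℝ := fun i => (#(nbrs N i) - 1 : ℝ) / #(nbrs N i)
  refine ⟨fun a i xi => log (m a i xi) - c i, fun a => log (z a) + 1 - ∑ j : {x // x ∈ N a}, c j,
    fun i xi => ?_, fun a xa => ?_⟩
  · rw [hbi, log_prod fun a ha => (hm a i (mem_nbrs.1 ha) xi).ne', add_sub_assoc,
      ← sum_add_div_card (hN i)]
    simp only [c, sub_add_cancel]
  · have hlog_n : ∀ j : {x // x ∈ N a},
        log (n j.1 a (xa j)) = log (bi j.1 (xa j)) - log (m a j.1 (xa j)) := fun j => by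
      rw [hbi, ← mul_prod_erase _ _ (mem_nbrs.2 j.2), ← hn_prod j.1 a j.2,
        log_mul (hm a j.1 j.2 _).ne' (hn j.1 a j.2 _).ne']
      ring
    rw [hba, log_mul (mul_pos (hz a) (hf a xa)).ne' (prod_pos fun j _ => hn j.1 a j.2 _).ne',
      log_mul (hz a).ne' (hf a xa).ne', log_prod fun j _ => (hn j.1 a j.2 _).ne',
      sum_congr rfl fun j _ => hlog_n j]
    simp only [sum_sub_distrib]
    ring

end FactorGraph

theorem statement10_general
    {ι α : Type} [Fintype α] [DecidableEq ι] [DecidableEq α]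
    (S : ι → Type) [∀ i, Fintype (S i)] [∀ i, DecidableEq (S i)]
    (N : α → Finset ι)
    (hNi : ∀ i : ι, ∃ a : α, i ∈ N a)
    (f : ∀ a : α, Cfg S (N a) → ℝ) (hf : ∀ a xa, 0 < f a xa)
    (ba : ∀ a : α, Cfg S (N a) → ℝ) (bi : ∀ i : ι, S i → ℝ)
    (hbapos : ∀ a : α, ∀ xa, 0 < ba a xa)
    (hbipos : ∀ i : ι, ∀ xi, 0 < bi i xi)
    (hmarg : ∀ a : α, ∀ i : ι, ∀ hi : i ∈ N a, ∀ xi : S i,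
      bi i xi = ∑ xa : Cfg S (N a), (if xa ⟨i, hi⟩ = xi then ba a xa else 0)) :
    (∃ (lam : α → ∀ i : ι, S i → ℝ) (γa : α → ℝ),
      (∀ i : ι, ∀ xi : S i,
        Real.log (bi i xi) =
          (∑ a ∈ univ.filter (fun c : α => i ∈ N c), lam a i xi)
          + ((univ.filter (fun c : α => i ∈ N c)).card : ℝ) - 1) ∧
      (∀ a : α, ∀ xa : Cfg S (N a),
        Real.log (ba a xa) =
          Real.log (f a xa)
          - (∑ j : {x // x ∈ N a}, lam a j.1 (xa j))
          + (∑ j : {x // x ∈ N a}, Real.log (bi j.1 (xa j)))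
          + γa a - 1))
    ↔
    (∃ (m : α → ∀ i : ι, S i → ℝ) (n : ∀ i : ι, α → S i → ℝ) (z : α → ℝ),
      (∀ a : α, ∀ i ∈ N a, ∀ xi, 0 < m a i xi) ∧
      (∀ i : ι, ∀ a : α, i ∈ N a → ∀ xi, 0 < n i a xi) ∧
      (∀ a : α, 0 < z a) ∧
      (∀ a : α, ∀ i : ι, ∀ hi : i ∈ N a, ∀ xi : S i,
        m a i xi = z a * ∑ xa : Cfg S (N a),
          (if xa ⟨i, hi⟩ = xi then
            f a xa * ∏ j ∈ univ.filter (fun j : {x // x ∈ N a} => j.1 ≠ i), n j.1 a (xa j)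
          else 0)) ∧
      (∀ i : ι, ∀ a : α, i ∈ N a → ∀ xi : S i,
        n i a xi = ∏ c ∈ (univ.filter (fun c : α => i ∈ N c)).erase a, m c i xi) ∧
      (∀ a : α, ∀ xa : Cfg S (N a),
        ba a xa = z a * f a xa * ∏ j : {x // x ∈ N a}, n j.1 a (xa j)) ∧
      (∀ i : ι, ∀ xi : S i,
        bi i xi = ∏ a ∈ univ.filter (fun c : α => i ∈ N c), m a i xi)) := by
  have hN : ∀ i, (FactorGraph.nbrs N i).Nonempty :=
    fun i => (hNi i).imp fun _ => FactorGraph.mem_nbrs.2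
  exact ⟨fun ⟨_, _, h⟩ =>
      FactorGraph.exists_isBPFixedPoint_of_isBetheStationary hN hf hbapos hbipos hmarg h,
    fun ⟨_, _, _, h⟩ => FactorGraph.exists_isBetheStationary_of_isBPFixedPoint hN hf h⟩

theorem statement10
    {ι α : Type} [Fintype ι] [Fintype α] [DecidableEq ι] [DecidableEq α]
    (S : ι → Type) [∀ i, Fintype (S i)] [∀ i, Nonempty (S i)] [∀ i, DecidableEq (S i)]
    (N : α → Finset ι)
    (hNi : ∀ i : ι, ∃ a : α, i ∈ N a)
    (f : ∀ a : α, Cfg S (N a) → ℝ) (hf : ∀ a xa, 0 < f a xa)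
    (ba : ∀ a : α, Cfg S (N a) → ℝ) (bi : ∀ i : ι, S i → ℝ)
    (hbapos : ∀ a : α, ∀ xa, 0 < ba a xa)
    (hbipos : ∀ i : ι, ∀ xi, 0 < bi i xi)
    (hbanorm : ∀ a : α, ∑ xa : Cfg S (N a), ba a xa = 1)
    (hbinorm : ∀ i : ι, ∑ xi : S i, bi i xi = 1)
    (hmarg : ∀ a : α, ∀ i : ι, ∀ hi : i ∈ N a, ∀ xi : S i,
      bi i xi = ∑ xa : Cfg S (N a), (if xa ⟨i, hi⟩ = xi then ba a xa else 0)) :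
    (∃ (lam : α → ∀ i : ι, S i → ℝ) (γa : α → ℝ),
      (∀ i : ι, ∀ xi : S i,
        Real.log (bi i xi) =
          (∑ a ∈ univ.filter (fun c : α => i ∈ N c), lam a i xi)
          + ((univ.filter (fun c : α => i ∈ N c)).card : ℝ) - 1) ∧
      (∀ a : α, ∀ xa : Cfg S (N a),
        Real.log (ba a xa) =
          Real.log (f a xa)
          - (∑ j : {x // x ∈ N a}, lam a j.1 (xa j))
          + (∑ j : {x // x ∈ N a}, Real.log (bi j.1 (xa j)))
          + γa a - 1))
    ↔
    (∃ (m : α → ∀ i : ι, S i → ℝ) (n : ∀ i : ι, α → S i → ℝ) (z : α → ℝ),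
      (∀ a : α, ∀ i ∈ N a, ∀ xi, 0 < m a i xi) ∧
      (∀ i : ι, ∀ a : α, i ∈ N a → ∀ xi, 0 < n i a xi) ∧
      (∀ a : α, 0 < z a) ∧
      (∀ a : α, ∀ i : ι, ∀ hi : i ∈ N a, ∀ xi : S i,
        m a i xi = z a * ∑ xa : Cfg S (N a),
          (if xa ⟨i, hi⟩ = xi then
            f a xa * ∏ j ∈ univ.filter (fun j : {x // x ∈ N a} => j.1 ≠ i), n j.1 a (xa j)
          else 0)) ∧
      (∀ i : ι, ∀ a : α, i ∈ N a → ∀ xi : S i,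
        n i a xi = ∏ c ∈ (univ.filter (fun c : α => i ∈ N c)).erase a, m c i xi) ∧
      (∀ a : α, ∀ xa : Cfg S (N a),
        ba a xa = z a * f a xa * ∏ j : {x // x ∈ N a}, n j.1 a (xa j)) ∧
      (∀ i : ι, ∀ xi : S i,
        bi i xi = ∏ a ∈ univ.filter (fun c : α => i ∈ N c), m a i xi)) :=
  statement10_general S N hNi f hf ba bi hbapos hbipos hmarg
end

section
/- (Coordinate-wise mean field update is optimal.) Fix i ∈ I, fix probability mass functions b_j on S_j for all j ∈ I\{i}, and suppose all factors f_a are positive. Define b_i*(x_i) := z_i exp( ∑_{a∈N(i)} ∑_{x_a\x_i} (∏_{j∈N(a)\i} b_j(x_j)) ln f_a(x_a) ), where z_i > 0 is the normalizing constant making ∑_{x_i} b_i*(x_i) = 1. Then for every probability mass function b_i on S_i, F_MF evaluated with b_i in the i-th slot is greater than or equal to F_MF evaluated with b_i* in the i-th slot, with equality if and only if b_i = b_i*. Here F_MF := ∑_{j∈I} ∑_{x_j} b_j(x_j) ln b_j(x_j) − ∑_{a∈A} ∑_{x_a} (∏_{j∈N(a)} b_j(x_j)) ln f_a(x_a), with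 the convention 0·ln 0 = 0. -/
open Finset

theorem statement13
    {ι α : Type} [Fintype ι] [Fintype α] [DecidableEq ι] [DecidableEq α]
    (S : ι → Type) [∀ i, Fintype (S i)] [∀ i, Nonempty (S i)] [∀ i, DecidableEq (S i)]
    (N : α → Finset ι)
    (f : ∀ a : α, Cfg S (N a) → ℝ) (hf : ∀ a xa, 0 < f a xa)
    (i : ι) (b : ∀ j : ι, S j → ℝ)
    (hb0 : ∀ j : ι, j ≠ i → ∀ xj, 0 ≤ b j xj)
    (hb1 : ∀ j : ι, j ≠ i → ∑ xj : S j, b j xj = 1)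
    (zi : ℝ) (hzi : 0 < zi)
    (bstar : S i → ℝ)
    (hbstar : ∀ xi : S i,
      bstar xi = zi * Real.exp (∑ a ∈ univ.filter (fun c : α => i ∈ N c),
        (if h : i ∈ N a then
          ∑ xa : Cfg S (N a),
            (if xa ⟨i, h⟩ = xi then
              (∏ j ∈ univ.filter (fun j : {x // x ∈ N a} => j.1 ≠ i), b j.1 (xa j)) *
                Real.log (f a xa)
            else 0)
        else 0)))
    (hbstarnorm : ∑ xi : S i, bstar xi = 1)
    (FMF : (S i → ℝ) → ℝ)
    (hFMF : ∀ q : S i → ℝ,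
      FMF q =
        (∑ j : ι, ∑ xj : S j,
          (Function.update b i q) j xj * Real.log ((Function.update b i q) j xj))
        - ∑ a : α, ∑ xa : Cfg S (N a),
            (∏ j : {x // x ∈ N a}, (Function.update b i q) j.1 (xa j)) *
              Real.log (f a xa)) :
    ∀ p : S i → ℝ, (∀ xi, 0 ≤ p xi) → (∑ xi : S i, p xi = 1) →
      FMF bstar ≤ FMF p ∧ (FMF p = FMF bstar ↔ p = bstar) := by
  intro p hp0 hp1
  -- the mean-field "local field"
  set L : S i → ℝ := fun xi =>
    ∑ a ∈ univ.filter (fun c : α => i ∈ N c),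
      (if h : i ∈ N a then
        ∑ xa : Cfg S (N a),
          (if xa ⟨i, h⟩ = xi then
            (∏ j ∈ univ.filter (fun j : {x // x ∈ N a} => j.1 ≠ i), b j.1 (xa j)) *
              Real.log (f a xa)
          else 0)
      else 0) with hLdef
  have hbpos : ∀ xi, 0 < bstar xi := by
    intro xi; rw [hbstar]; positivity
  have hL : ∀ xi, L xi = Real.log (bstar xi) - Real.log zi := by
    intro xi
    rw [hbstar xi, Real.log_mul (ne_of_gt hzi) (Real.exp_pos _).ne', Real.log_exp]
    ring
  -- product splitting for factors containing i
  have hprod : ∀ (q : S i → ℝ) (a : α) (h : i ∈ N a) (xa : Cfg S (N a)),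
      (∏ j : {x // x ∈ N a}, Function.update b i q j.1 (xa j))
        = q (xa ⟨i, h⟩) *
          ∏ j ∈ univ.filter (fun j : {x // x ∈ N a} => j.1 ≠ i), b j.1 (xa j) := by
    intro q a h xa
    have hset : univ.filter (fun j : {x // x ∈ N a} => j.1 ≠ i)
        = univ.erase ⟨i, h⟩ := by
      ext j
      simp [Finset.mem_erase, Ne, Subtype.ext_iff, and_comm]
    rw [hset, ← Finset.mul_prod_erase univ _ (Finset.mem_univ (⟨i, h⟩ : {x // x ∈ N a}))]
    congr 1
    · simp
    · exact Finset.prod_congr rfl fun j hj => by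
        rw [Function.update_of_ne (fun e => (Finset.mem_erase.mp hj).1 (Subtype.ext e))]
  -- per-factor identity
  have key : ∀ (q : S i → ℝ) (a : α) (h : i ∈ N a),
      (∑ xa : Cfg S (N a),
        (∏ j : {x // x ∈ N a}, Function.update b i q j.1 (xa j)) * Real.log (f a xa))
      = ∑ xi : S i, q xi *
          ∑ xa : Cfg S (N a),
            (if xa ⟨i, h⟩ = xi then
              (∏ j ∈ univ.filter (fun j : {x // x ∈ N a} => j.1 ≠ i), b j.1 (xa j)) *
                Real.log (f a xa)
            else 0) := by
    intro q a h
    simp_rw [Finset.mul_sum, mul_ite, mul_zero]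
    rw [Finset.sum_comm]
    apply Finset.sum_congr rfl
    intro xa _
    rw [Finset.sum_ite_eq, if_pos (Finset.mem_univ _), hprod q a h xa]
    ring
  -- structure of FMF
  have hform : ∀ q : S i → ℝ,
      FMF q = ((∑ xi : S i, q xi * Real.log (q xi)) - ∑ xi : S i, q xi * L xi)
        + ((∑ j ∈ univ.erase i, ∑ xj : S j, b j xj * Real.log (b j xj))
          - ∑ a ∈ univ.filter (fun c : α => ¬ i ∈ N c),
              ∑ xa : Cfg S (N a),
                (∏ j : {x // x ∈ N a}, b j.1 (xa j)) * Real.log (f a xa)) := by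
    intro q
    rw [hFMF q]
    have hent : (∑ j : ι, ∑ xj : S j,
        Function.update b i q j xj * Real.log (Function.update b i q j xj))
        = (∑ xi : S i, q xi * Real.log (q xi))
          + ∑ j ∈ univ.erase i, ∑ xj : S j, b j xj * Real.log (b j xj) := by
      rw [← Finset.add_sum_erase univ _ (Finset.mem_univ i)]
      congr 1
      · simp
      · exact Finset.sum_congr rfl fun j hj => by
          rw [Function.update_of_ne (Finset.mem_erase.mp hj).1]
    have hfac : (∑ a : α, ∑ xa : Cfg S (N a),
        (∏ j : {x // x ∈ N a}, Function.update b i q j.1 (xa j)) * Real.log (f a xa))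
        = (∑ xi : S i, q xi * L xi)
          + ∑ a ∈ univ.filter (fun c : α => ¬ i ∈ N c),
              ∑ xa : Cfg S (N a),
                (∏ j : {x // x ∈ N a}, b j.1 (xa j)) * Real.log (f a xa) := by
      rw [← Finset.sum_filter_add_sum_filter_not univ (fun c : α => i ∈ N c)]
      congr 1
      · rw [hLdef]
        simp_rw [Finset.mul_sum]
        rw [Finset.sum_comm]
        apply Finset.sum_congr rfl
        intro a ha
        have h : i ∈ N a := (Finset.mem_filter.mp ha).2
        rw [key q a h]
        apply Finset.sum_congr rfl
        intro xi _
        rw [dif_pos h]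
      · apply Finset.sum_congr rfl
        intro a ha
        have h : i ∉ N a := by simpa using (Finset.mem_filter.mp ha).2
        apply Finset.sum_congr rfl
        intro xa _
        congr 1
        exact Finset.prod_congr rfl fun j _ => by
          rw [Function.update_of_ne (fun e => h (by rw [← e]; exact j.2))]
    rw [hent, hfac]
    ring
  -- reduce to KL divergence
  have e1 : ∀ q : S i → ℝ, (∑ xi : S i, q xi = 1) →
      (∑ xi : S i, q xi * L xi)
        = (∑ xi : S i, q xi * Real.log (bstar xi)) - Real.log zi := by
    intro q hq
    have : (∑ xi : S i, q xi * L xi)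
        = (∑ xi : S i, q xi * Real.log (bstar xi)) - (∑ xi : S i, q xi) * Real.log zi := by
      rw [Finset.sum_mul, ← Finset.sum_sub_distrib]
      exact Finset.sum_congr rfl fun xi _ => by rw [hL]; ring
    rw [this, hq, one_mul]
  have hdiff : FMF p - FMF bstar
      = ∑ xi : S i, (p xi * Real.log (p xi) - p xi * Real.log (bstar xi)) := by
    rw [hform p, hform bstar, e1 p hp1, e1 bstar hbstarnorm, Finset.sum_sub_distrib]
    ring
  -- Gibbs inequality, termwise
  have hterm_le : ∀ xi : S i, p xi - bstar xi
      ≤ p xi * Real.log (p xi) - p xi * Real.log (bstar xi) := by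
    intro xi
    rcases eq_or_lt_of_le (hp0 xi) with hp | hp
    · rw [← hp]; simpa using (hbpos xi).le
    · have hq := hbpos xi
      have hdiv : 0 < bstar xi / p xi := div_pos hq hp
      have := Real.log_le_sub_one_of_pos hdiv
      rw [Real.log_div hq.ne' hp.ne'] at this
      have h2 : p xi * (Real.log (bstar xi) - Real.log (p xi))
          ≤ p xi * (bstar xi / p xi - 1) := by
        exact mul_le_mul_of_nonneg_left this hp.le
      rw [mul_sub, div_sub_one hp.ne', mul_div_cancel₀ _ hp.ne'] at h2
      linarith
  have hterm_eq : ∀ xi : S i,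
      (p xi - bstar xi = p xi * Real.log (p xi) - p xi * Real.log (bstar xi))
        ↔ p xi = bstar xi := by
    intro xi
    constructor
    · intro he
      by_contra hne
      rcases eq_or_lt_of_le (hp0 xi) with hp | hp
      · rw [← hp] at he
        simp only [Real.log_zero, mul_zero, zero_mul, zero_sub, sub_zero] at he
        exact (hbpos xi).ne' (by linarith)
      · have hq := hbpos xi
        have hdiv : 0 < bstar xi / p xi := div_pos hq hp
        have hne1 : bstar xi / p xi ≠ 1 := by
          intro h1
          exact hne ((div_eq_one_iff_eq hp.ne').mp h1).symm
        have := Real.log_lt_sub_one_of_pos hdiv hne1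
        rw [Real.log_div hq.ne' hp.ne'] at this
        have h2 : p xi * (Real.log (bstar xi) - Real.log (p xi))
            < p xi * (bstar xi / p xi - 1) := by
          exact mul_lt_mul_of_pos_left this hp
        rw [mul_sub, div_sub_one hp.ne', mul_div_cancel₀ _ hp.ne'] at h2
        linarith
    · intro he; rw [he]; ring
  have hsum0 : ∑ xi : S i, (p xi - bstar xi) = 0 := by
    rw [Finset.sum_sub_distrib, hp1, hbstarnorm, sub_self]
  have hKL : 0 ≤ ∑ xi : S i, (p xi * Real.log (p xi) - p xi * Real.log (bstar xi)) := by
    rw [← hsum0]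
    exact Finset.sum_le_sum fun xi _ => hterm_le xi
  constructor
  · linarith [hdiff, hKL]
  · constructor
    · intro he
      have hz : ∑ xi : S i, (p xi - bstar xi)
          = ∑ xi : S i, (p xi * Real.log (p xi) - p xi * Real.log (bstar xi)) := by
        rw [hsum0, ← hdiff, he, sub_self]
      have := (Finset.sum_eq_sum_iff_of_le (fun xi _ => hterm_le xi)).mp hz
      funext xi
      exact (hterm_eq xi).mp (this xi (Finset.mem_univ xi))
    · intro he
      subst he
      rfl
end

section
/- Suppose |N(a) ∩ I_BP| ≤ 1 for all a ∈ A_MF, all factors f_a are positive, the beliefs b_j (j ∈ I) are positive probability mass functions, and the beliefs b_a (a ∈ A_BP) are positive probability mass functions on the configurations x_a satisfying the marginalization constraints b_i(x_i) = ∑_{x_a\x_i} b_a(x_a) for all a ∈ A_BP, i ∈ N(a). For i ∈ I_BP ∩ I_MF and a ∈ N_MF(i) define m^MF_{a→i}(x_i) := exp( ∑_{x_a\x_i} (∏_{j∈N(a)\i} b_j(x_j)) ln f_a(x_a) ), and define F_BP := ∑_{a∈A_BP} ∑_{x_a} b_a(x_a) ln(b_a(x_a)/f_a(x_a)) − ∑_{i∈I_BP∩I_MF}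 ∑_{a∈N_MF(i)} ∑_{x_i} b_i(x_i) ln m^MF_{a→i}(x_i) − ∑_{i∈I_BP} (|N_BP(i)|−1) ∑_{x_i} b_i(x_i) ln b_i(x_i). Then F_BP,MF − F_BP = ∑_{j∈I_MF\I_BP} ∑_{x_j} b_j(x_j) ln b_j(x_j) − ∑_{a∈A_MF with N(a)∩I_BP = ∅} ∑_{x_a} (∏_{j∈N(a)} b_j(x_j)) ln f_a(x_a); in particular, the difference F_BP,MF − F_BP depends only on the beliefs b_j with j ∈ I_MF\I_BP. -/
open Finset

/-!
The two free energies share the Bethe term over `A_BP`. Since `ln m^MF_{a→i}(x_i)` is the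
mean-field energy of `a` with `x_i` held fixed, averaging it against `b_i` gives back the full
mean-field energy of `a`. Each mean-field factor meets `I_BP` in at most one variable, so this
cancels exactly the factors meeting `I_BP` once; what survives are the mean-field factors disjoint
from `I_BP` and the entropies of the variables outside `I_BP`, whose counting number
`|N_BP(j)| - 1` is `-1`.
-/

theorem sum_mul_sum_ite_prod_erase {κ : Type*} [Fintype κ] [DecidableEq κ] {S : κ → Type*}
    [∀ k, Fintype (S k)] [∀ k, DecidableEq (S k)] (b : ∀ k, S k → ℝ) (g : (∀ k, S k) → ℝ)
    (k₀ : κ) :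
    ∑ y : S k₀, b k₀ y * ∑ x : (∀ k, S k),
        (if x k₀ = y then (∏ k ∈ univ.erase k₀, b k (x k)) * g x else 0) =
      ∑ x : (∀ k, S k), (∏ k, b k (x k)) * g x := by
  simp only [mul_sum, mul_ite, mul_zero]
  rw [sum_comm]
  refine sum_congr rfl fun x _ => ?_
  rw [sum_ite_eq, if_pos (mem_univ _), ← mul_assoc,
    mul_prod_erase univ (fun k => b k (x k)) (mem_univ k₀)]

theorem sum_eq_ite_of_card_le_one {ι M : Type*} [DecidableEq ι] [AddCommMonoid M]
    {t : Finset ι} {g : ι → M} {c : M} (ht : #t ≤ 1) (hg : ∀ i ∈ t, g i = c) :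
    ∑ i ∈ t, g i = if t = ∅ then 0 else c := by
  rcases t.eq_empty_or_nonempty with rfl | hne
  · simp
  · obtain ⟨i, rfl⟩ := card_eq_one.1 (le_antisymm ht hne.card_pos)
    simp [hg i (mem_singleton_self i)]

theorem sum_inter_biUnion_sum_filter_mem {ι α M : Type*} [DecidableEq ι] [AddCommMonoid M]
    (s : Finset α) (N : α → Finset ι) (J : Finset ι) (g : α → ι → M) :
    ∑ i ∈ J ∩ s.biUnion N, ∑ a ∈ s with i ∈ N a, g a i = ∑ a ∈ s, ∑ i ∈ N a ∩ J, g a i :=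
  sum_comm' fun i a => by
    simp only [mem_inter, mem_biUnion, mem_filter]
    exact ⟨fun ⟨⟨hJ, _⟩, ha, hi⟩ => ⟨⟨hi, hJ⟩, ha⟩, fun ⟨⟨hi, hJ⟩, ha⟩ => ⟨⟨hJ, a, ha, hi⟩, ha, hi⟩⟩

theorem sum_inter_biUnion_sum_filter_mem_of_card_le_one {ι α M : Type*} [DecidableEq ι]
    [AddCommMonoid M] {s : Finset α} {N : α → Finset ι} {J : Finset ι} {g : α → ι → M}
    {T : α → M} (hcard : ∀ a ∈ s, #(N a ∩ J) ≤ 1) (hg : ∀ a ∈ s, ∀ i ∈ N a, g a i = T a) :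
    ∑ i ∈ J ∩ s.biUnion N, ∑ a ∈ s with i ∈ N a, g a i = ∑ a ∈ s with ¬N a ∩ J = ∅, T a := by
  rw [sum_inter_biUnion_sum_filter_mem, sum_filter]
  refine sum_congr rfl fun a ha => ?_
  rw [sum_eq_ite_of_card_le_one (hcard a ha) fun i hi => hg a ha i (mem_inter.1 hi).1]
  exact (ite_not _ _ _).symm

theorem sum_mul_eq_sum_sub_sum_sdiff {ι : Type*} [Fintype ι] [DecidableEq ι] {J K : Finset ι}
    (hcov : ∀ i, i ∈ J ∪ K) {c E : ι → ℝ} (hc : ∀ i ∉ J, c i = -1) :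
    ∑ i, c i * E i = ∑ i ∈ J, c i * E i - ∑ i ∈ K \ J, E i := by
  have hsdiff : univ \ J = K \ J := by
    ext i
    have := mem_union.1 (hcov i)
    simp only [mem_sdiff, mem_univ, true_and]
    tauto
  rw [← sum_sdiff (subset_univ J), hsdiff, add_comm, sub_eq_add_neg, ← sum_neg_distrib]
  congr 1
  refine sum_congr rfl fun i hi => ?_
  rw [hc i (mem_sdiff.1 hi).2, neg_one_mul]

theorem card_filter_mem_eq_zero_of_notMem_biUnion {ι α : Type*} [DecidableEq ι] {s : Finset α}
    {N : α → Finset ι} {i : ι} (hi : i ∉ s.biUnion N) : #{a ∈ s | i ∈ N a} = 0 := by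
  rw [card_eq_zero, filter_eq_empty_iff]
  exact fun a ha hia => hi (mem_biUnion.2 ⟨a, ha, hia⟩)

theorem statement15_general
    {ι α : Type} [Fintype ι] [DecidableEq ι]
    (S : ι → Type) [∀ i, Fintype (S i)] [∀ i, DecidableEq (S i)]
    (N : α → Finset ι) (αBP αMF : Finset α)
    (hIcov : ∀ i : ι, i ∈ αBP.biUnion N ∪ αMF.biUnion N)
    (hcondconv : ∀ a ∈ αMF, (N a ∩ αBP.biUnion N).card ≤ 1)
    (f : ∀ a : α, Cfg S (N a) → ℝ)
    (ba : ∀ a : α, Cfg S (N a) → ℝ) (bi : ∀ i : ι, S i → ℝ)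
    (mMF : α → ∀ i : ι, S i → ℝ)
    (hmMF : ∀ a ∈ αMF, ∀ i : ι, ∀ hi : i ∈ N a, ∀ xi : S i,
      mMF a i xi = Real.exp (∑ xa : Cfg S (N a),
        (if xa ⟨i, hi⟩ = xi then
          (∏ j ∈ univ.filter (fun j : {x // x ∈ N a} => j.1 ≠ i), bi j.1 (xa j)) *
            Real.log (f a xa)
        else 0)))
    (FBPMF FBP : ℝ)
    (hFBPMF : FBPMF =
      (∑ a ∈ αBP, ∑ xa : Cfg S (N a), ba a xa * Real.log (ba a xa / f a xa))
      - (∑ a ∈ αMF, ∑ xa : Cfg S (N a),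
          (∏ j : {x // x ∈ N a}, bi j.1 (xa j)) * Real.log (f a xa))
      - (∑ i : ι, ((((αBP.filter (fun c => i ∈ N c)).card : ℝ) - 1) *
          ∑ xi : S i, bi i xi * Real.log (bi i xi))))
    (hFBP : FBP =
      (∑ a ∈ αBP, ∑ xa : Cfg S (N a), ba a xa * Real.log (ba a xa / f a xa))
      - (∑ i ∈ αBP.biUnion N ∩ αMF.biUnion N,
          ∑ a ∈ αMF.filter (fun c => i ∈ N c),
            ∑ xi : S i, bi i xi * Real.log (mMF a i xi))
      - (∑ i ∈ αBP.biUnion N, ((((αBP.filter (fun c => i ∈ N c)).card : ℝ) - 1) *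
          ∑ xi : S i, bi i xi * Real.log (bi i xi)))) :
    FBPMF - FBP =
      (∑ j ∈ αMF.biUnion N \ αBP.biUnion N,
        ∑ xj : S j, bi j xj * Real.log (bi j xj))
      - ∑ a ∈ αMF.filter (fun c => N c ∩ αBP.biUnion N = ∅),
          ∑ xa : Cfg S (N a),
            (∏ j : {x // x ∈ N a}, bi j.1 (xa j)) * Real.log (f a xa) := by
  have hmessage : ∀ a ∈ αMF, ∀ i ∈ N a,
      ∑ xi : S i, bi i xi * Real.log (mMF a i xi) =
        ∑ xa : Cfg S (N a), (∏ j : {x // x ∈ N a}, bi j.1 (xa j)) * Real.log (f a xa) := by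
    intro a ha i hi
    have herase : univ.filter (fun j : {x // x ∈ N a} => j.1 ≠ i) = univ.erase ⟨i, hi⟩ := by
      rw [← filter_ne']
      exact filter_congr fun j _ => by simp [Subtype.ext_iff]
    simp only [hmMF a ha i hi, Real.log_exp, herase]
    exact sum_mul_sum_ite_prod_erase (fun j : {x // x ∈ N a} => bi j.1) _ ⟨i, hi⟩
  rw [hFBPMF, hFBP, sum_inter_biUnion_sum_filter_mem_of_card_le_one hcondconv hmessage,
    sum_mul_eq_sum_sub_sum_sdiff hIcov fun i hi => by
      rw [card_filter_mem_eq_zero_of_notMem_biUnion hi, Nat.cast_zero, zero_sub],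
    ← sum_filter_not_add_sum_filter αMF fun c => N c ∩ αBP.biUnion N = ∅]
  ring

theorem statement15
    {ι α : Type} [Fintype ι] [Fintype α] [DecidableEq ι] [DecidableEq α]
    (S : ι → Type) [∀ i, Fintype (S i)] [∀ i, Nonempty (S i)] [∀ i, DecidableEq (S i)]
    (N : α → Finset ι) (αBP αMF : Finset α)
    (hdisj : Disjoint αBP αMF) (hcov : αBP ∪ αMF = Finset.univ)
    (hIcov : ∀ i : ι, i ∈ αBP.biUnion N ∪ αMF.biUnion N)
    (hcondconv : ∀ a ∈ αMF, (N a ∩ αBP.biUnion N).card ≤ 1)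
    (f : ∀ a : α, Cfg S (N a) → ℝ) (hf : ∀ a xa, 0 < f a xa)
    (ba : ∀ a : α, Cfg S (N a) → ℝ) (bi : ∀ i : ι, S i → ℝ)
    (hbapos : ∀ a ∈ αBP, ∀ xa, 0 < ba a xa)
    (hbanorm : ∀ a ∈ αBP, ∑ xa : Cfg S (N a), ba a xa = 1)
    (hbipos : ∀ i : ι, ∀ xi, 0 < bi i xi)
    (hbinorm : ∀ i : ι, ∑ xi : S i, bi i xi = 1)
    (hmarg : ∀ a ∈ αBP, ∀ i : ι, ∀ hi : i ∈ N a, ∀ xi : S i,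
      bi i xi = ∑ xa : Cfg S (N a), (if xa ⟨i, hi⟩ = xi then ba a xa else 0))
    (mMF : α → ∀ i : ι, S i → ℝ)
    (hmMF : ∀ a ∈ αMF, ∀ i : ι, ∀ hi : i ∈ N a, ∀ xi : S i,
      mMF a i xi = Real.exp (∑ xa : Cfg S (N a),
        (if xa ⟨i, hi⟩ = xi then
          (∏ j ∈ univ.filter (fun j : {x // x ∈ N a} => j.1 ≠ i), bi j.1 (xa j)) *
            Real.log (f a xa)
        else 0)))
    (FBPMF FBP : ℝ)
    (hFBPMF : FBPMF =
      (∑ a ∈ αBP, ∑ xa : Cfg S (N a), ba a xa * Real.log (ba a xa / f a xa))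
      - (∑ a ∈ αMF, ∑ xa : Cfg S (N a),
          (∏ j : {x // x ∈ N a}, bi j.1 (xa j)) * Real.log (f a xa))
      - (∑ i : ι, ((((αBP.filter (fun c => i ∈ N c)).card : ℝ) - 1) *
          ∑ xi : S i, bi i xi * Real.log (bi i xi))))
    (hFBP : FBP =
      (∑ a ∈ αBP, ∑ xa : Cfg S (N a), ba a xa * Real.log (ba a xa / f a xa))
      - (∑ i ∈ αBP.biUnion N ∩ αMF.biUnion N,
          ∑ a ∈ αMF.filter (fun c => i ∈ N c),
            ∑ xi : S i, bi i xi * Real.log (mMF a i xi))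
      - (∑ i ∈ αBP.biUnion N, ((((αBP.filter (fun c => i ∈ N c)).card : ℝ) - 1) *
          ∑ xi : S i, bi i xi * Real.log (bi i xi)))) :
    FBPMF - FBP =
      (∑ j ∈ αMF.biUnion N \ αBP.biUnion N,
        ∑ xj : S j, bi j xj * Real.log (bi j xj))
      - ∑ a ∈ αMF.filter (fun c => N c ∩ αBP.biUnion N = ∅),
          ∑ xa : Cfg S (N a),
            (∏ j : {x // x ∈ N a}, bi j.1 (xa j)) * Real.log (f a xa) :=
  statement15_general S N αBP αMF hIcov hcondconv f ba bi mMF hmMF FBPMF FBP hFBPMF hFBP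
end

section
/- (EM as degenerate mean field.) Fix i ∈ I, fix probability mass functions b_j on S_j for all j ∈ I\{i}, and suppose all factors f_a are positive. For x̄ ∈ S_i let δ_{x̄} denote the point mass at x̄, and define m_{a→i}(x_i) := exp( ∑_{x_a\x_i} (∏_{j∈N(a)\i} b_j(x_j)) ln f_a(x_a) ) for a ∈ N(i). Then, with the convention 0·ln 0 = 0, F_MF evaluated with b_i = δ_{x̄} equals C − ln( ∏_{a∈N(i)} m_{a→i}(x̄) ), where C := ∑_{j∈I\{i}} ∑_{x_j} b_j(x_j) ln b_j(x_j) − ∑_{a∈A, i∉N(a)} ∑_{x_a} (∏_{j∈N(a)} b_j(x_j)) ln f_a(x_a) does not depend on x̄; consequently x̄ minimizes x̄ ↦ F_MF(b with b_i = δ_{x̄}) if and only if x̄ maximizes x̄ ↦ ∏_{a∈N(i)} m_{a→i}(x̄). Here F_MF := ∑_{j∈I} ∑_{x_j} b_j(x_j) ln b_j(x_j) − ∑_{a∈A} ∑_{x_a} (∏_{j∈N(a)} b_j(x_j)) ln f_a(x_a). -/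
open Finset

/-
With `b i` a point mass at `x̄`, the entropy term of `i` vanishes (`0 log 0 = 1 log 1 = 0`),
the factors not touching `i` do not see `x̄`, and the energy of each factor `a ∋ i` collapses to
the slice `x_i = x̄` of its sum, which is exactly `ln m_{a→i}(x̄)`. Hence
`F_MF = C - ∑ₐ ln m_{a→i}(x̄)`, and since `ln` is strictly increasing, minimizing `F_MF` is
maximizing `∏ₐ m_{a→i}`.
-/

section Update

variable {ι : Type} [DecidableEq ι] {S : ι → Type}

theorem sum_sum_update_mul_log [Fintype ι] [∀ j, Fintype (S j)] (b : ∀ j, S j → ℝ) (i : ι)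
    (g : S i → ℝ) :
    ∑ j, ∑ x : S j, Function.update b i g j x * Real.log (Function.update b i g j x) =
      ∑ x, g x * Real.log (g x) + ∑ j ∈ univ.erase i, ∑ x : S j, b j x * Real.log (b j x) := by
  rw [← add_sum_erase _ _ (mem_univ i), Function.update_self]
  congr 1
  refine sum_congr rfl fun j hj => ?_
  simp only [Function.update_of_ne (ne_of_mem_erase hj)]

theorem prod_update_of_notMem (b : ∀ j, S j → ℝ) (i : ι) (g : S i → ℝ) {t : Finset ι}
    (hi : i ∉ t) (x : Cfg S t) :
    ∏ j : t, Function.update b i g j.1 (x j) = ∏ j : t, b j.1 (x j) :=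
  prod_congr rfl fun j _ => by
    rw [Function.update_of_ne fun hj : j.1 = i => hi (hj ▸ j.2)]

theorem prod_update_of_mem (b : ∀ j, S j → ℝ) (i : ι) (g : S i → ℝ) {t : Finset ι}
    (hi : i ∈ t) (x : Cfg S t) :
    ∏ j : t, Function.update b i g j.1 (x j) =
      g (x ⟨i, hi⟩) * ∏ j ∈ univ.filter (fun j : t => j.1 ≠ i), b j.1 (x j) := by
  have hfilter : univ.filter (fun j : t => j.1 ≠ i) = univ.erase ⟨i, hi⟩ := by
    ext j
    simp [Subtype.ext_iff]
  rw [← mul_prod_erase univ _ (mem_univ ⟨i, hi⟩), hfilter, Function.update_self]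
  congr 1
  refine prod_congr rfl fun j hj => ?_
  rw [Function.update_of_ne fun hj' => ne_of_mem_erase hj (Subtype.ext hj')]

theorem sum_prod_update_pointMass_mul [∀ j, Fintype (S j)] [∀ j, DecidableEq (S j)]
    (b : ∀ j, S j → ℝ) (i : ι) (xbar : S i) {t : Finset ι} (hi : i ∈ t) (φ : Cfg S t → ℝ) :
    ∑ x : Cfg S t,
        (∏ j : t, Function.update b i (fun y => if y = xbar then (1 : ℝ) else 0) j.1 (x j)) *
          φ x =
      ∑ x : Cfg S t, if x ⟨i, hi⟩ = xbar then
        (∏ j ∈ univ.filter (fun j : t => j.1 ≠ i), b j.1 (x j)) * φ x else 0 := by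
  refine sum_congr rfl fun x _ => ?_
  rw [prod_update_of_mem b i _ hi x]
  split_ifs <;> ring

theorem sum_sum_prod_update_mul [∀ j, Fintype (S j)] {α : Type} [Fintype α] (N : α → Finset ι)
    (φ : ∀ a, Cfg S (N a) → ℝ) (b : ∀ j, S j → ℝ) (i : ι) (g : S i → ℝ) :
    ∑ a, ∑ x : Cfg S (N a), (∏ j : N a, Function.update b i g j.1 (x j)) * φ a x =
      ∑ a ∈ univ.filter (fun c => i ∈ N c), ∑ x : Cfg S (N a),
          (∏ j : N a, Function.update b i g j.1 (x j)) * φ a x +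
        ∑ a ∈ univ.filter (fun c => i ∉ N c), ∑ x : Cfg S (N a),
          (∏ j : N a, b j.1 (x j)) * φ a x := by
  rw [← sum_filter_add_sum_filter_not univ (fun c => i ∈ N c)]
  congr 1
  refine sum_congr rfl fun a ha => sum_congr rfl fun x _ => ?_
  rw [prod_update_of_notMem b i g (mem_filter.mp ha).2 x]

end Update

theorem forall_le_iff_forall_le_of_eq_sub_log {β : Type} {F P : β → ℝ} {C : ℝ}
    (hP : ∀ x, 0 < P x) (hF : ∀ x, F x = C - Real.log (P x)) (x : β) :
    (∀ x', F x ≤ F x') ↔ ∀ x', P x' ≤ P x := by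
  simp only [hF, sub_le_sub_iff_left, Real.log_le_log_iff (hP _) (hP _)]

theorem statement18_general
    {ι α : Type} [Fintype ι] [Fintype α] [DecidableEq ι]
    (S : ι → Type) [∀ i, Fintype (S i)] [∀ i, DecidableEq (S i)]
    (N : α → Finset ι)
    (f : ∀ a : α, Cfg S (N a) → ℝ)
    (i : ι) (b : ∀ j : ι, S j → ℝ)
    (m : α → S i → ℝ)
    (hm : ∀ a : α, ∀ h : i ∈ N a, ∀ xi : S i,
      m a xi = Real.exp (∑ xa : Cfg S (N a),
        (if xa ⟨i, h⟩ = xi then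
          (∏ j ∈ univ.filter (fun j : {x // x ∈ N a} => j.1 ≠ i), b j.1 (xa j)) *
            Real.log (f a xa)
        else 0)))
    (Fδ : S i → ℝ)
    (hFδ : ∀ xbar : S i,
      Fδ xbar =
        (∑ j : ι, ∑ xj : S j,
          (Function.update b i (fun xi => if xi = xbar then (1 : ℝ) else 0)) j xj *
            Real.log
              ((Function.update b i (fun xi => if xi = xbar then (1 : ℝ) else 0)) j xj))
        - ∑ a : α, ∑ xa : Cfg S (N a),
            (∏ j : {x // x ∈ N a},
              (Function.update b i (fun xi => if xi = xbar then (1 : ℝ) else 0)) j.1 (xa j)) *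
              Real.log (f a xa))
    (C : ℝ)
    (hC : C =
      (∑ j ∈ univ.erase i, ∑ xj : S j, b j xj * Real.log (b j xj))
      - ∑ a ∈ univ.filter (fun c : α => i ∉ N c),
          ∑ xa : Cfg S (N a),
            (∏ j : {x // x ∈ N a}, b j.1 (xa j)) * Real.log (f a xa)) :
    (∀ xbar : S i,
      Fδ xbar = C - Real.log (∏ a ∈ univ.filter (fun c : α => i ∈ N c), m a xbar)) ∧
    (∀ xbar : S i,
      (∀ x' : S i, Fδ xbar ≤ Fδ x') ↔
        (∀ x' : S i,
          (∏ a ∈ univ.filter (fun c : α => i ∈ N c), m a x') ≤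
            ∏ a ∈ univ.filter (fun c : α => i ∈ N c), m a xbar)) := by
  have hm_pos : ∀ xbar a, a ∈ univ.filter (fun c => i ∈ N c) → 0 < m a xbar := fun xbar a ha => by
    rw [hm a (mem_filter.mp ha).2]
    exact Real.exp_pos _
  have hFδ_eq : ∀ xbar : S i,
      Fδ xbar = C - Real.log (∏ a ∈ univ.filter (fun c : α => i ∈ N c), m a xbar) := by
    intro xbar
    have hlog_m : Real.log (∏ a ∈ univ.filter (fun c => i ∈ N c), m a xbar) =
        ∑ a ∈ univ.filter (fun c => i ∈ N c), ∑ xa : Cfg S (N a),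
          (∏ j : N a, Function.update b i (fun y => if y = xbar then (1 : ℝ) else 0) j.1 (xa j)) *
            Real.log (f a xa) := by
      rw [Real.log_prod fun a ha => (hm_pos xbar a ha).ne']
      refine sum_congr rfl fun a ha => ?_
      rw [hm a (mem_filter.mp ha).2, Real.log_exp,
        sum_prod_update_pointMass_mul b i xbar (mem_filter.mp ha).2]
    have hentropy_pointMass :
        ∑ y : S i, (if y = xbar then (1 : ℝ) else 0) * Real.log (if y = xbar then 1 else 0) = 0 :=
      sum_eq_zero fun y _ => by split_ifs <;> simp
    rw [hFδ, hC, hlog_m, sum_sum_update_mul_log, hentropy_pointMass, sum_sum_prod_update_mul]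
    ring
  exact ⟨hFδ_eq, forall_le_iff_forall_le_of_eq_sub_log
    (fun x => prod_pos (hm_pos x)) hFδ_eq⟩

theorem statement18
    {ι α : Type} [Fintype ι] [Fintype α] [DecidableEq ι] [DecidableEq α]
    (S : ι → Type) [∀ i, Fintype (S i)] [∀ i, Nonempty (S i)] [∀ i, DecidableEq (S i)]
    (N : α → Finset ι)
    (f : ∀ a : α, Cfg S (N a) → ℝ) (hf : ∀ a xa, 0 < f a xa)
    (i : ι) (b : ∀ j : ι, S j → ℝ)
    (hb0 : ∀ j : ι, j ≠ i → ∀ xj, 0 ≤ b j xj)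
    (hb1 : ∀ j : ι, j ≠ i → ∑ xj : S j, b j xj = 1)
    (m : α → S i → ℝ)
    (hm : ∀ a : α, ∀ h : i ∈ N a, ∀ xi : S i,
      m a xi = Real.exp (∑ xa : Cfg S (N a),
        (if xa ⟨i, h⟩ = xi then
          (∏ j ∈ univ.filter (fun j : {x // x ∈ N a} => j.1 ≠ i), b j.1 (xa j)) *
            Real.log (f a xa)
        else 0)))
    (Fδ : S i → ℝ)
    (hFδ : ∀ xbar : S i,
      Fδ xbar =
        (∑ j : ι, ∑ xj : S j,
          (Function.update b i (fun xi => if xi = xbar then (1 : ℝ) else 0)) j xj *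
            Real.log
              ((Function.update b i (fun xi => if xi = xbar then (1 : ℝ) else 0)) j xj))
        - ∑ a : α, ∑ xa : Cfg S (N a),
            (∏ j : {x // x ∈ N a},
              (Function.update b i (fun xi => if xi = xbar then (1 : ℝ) else 0)) j.1 (xa j)) *
              Real.log (f a xa))
    (C : ℝ)
    (hC : C =
      (∑ j ∈ univ.erase i, ∑ xj : S j, b j xj * Real.log (b j xj))
      - ∑ a ∈ univ.filter (fun c : α => i ∉ N c),
          ∑ xa : Cfg S (N a),
            (∏ j : {x // x ∈ N a}, b j.1 (xa j)) * Real.log (f a xa)) :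
    (∀ xbar : S i,
      Fδ xbar = C - Real.log (∏ a ∈ univ.filter (fun c : α => i ∈ N c), m a xbar)) ∧
    (∀ xbar : S i,
      (∀ x' : S i, Fδ xbar ≤ Fδ x') ↔
        (∀ x' : S i,
          (∏ a ∈ univ.filter (fun c : α => i ∈ N c), m a x') ≤
            ∏ a ∈ univ.filter (fun c : α => i ∈ N c), m a xbar)) :=
  statement18_general S N f i b m hm Fδ hFδ C hC
end
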